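/- arXiv:2509.11904 — 5 statements merged into one kernel-verified Lean document; each statement's English description precedes it below -/
import Mathlib

section
/- Let h be an optimal height assignment for the Optimum Static Skip List Network problem OSSLN(V,W) on V = {1,…,n}. Then for every vertex x ∈ V, the set P_x(h) of ordered pairs (u,v) whose routing path from u to v contains x equals the union of { (u,v) : u < x and x ≤ v ≤ R(x,h) } and { (u,v) : L(x,h) ≤ u < x and v > R(x,h) }. -/
open scoped Classical ENNReal NNReal
open MeasureTheory ProbabilityTheory

namespace P2P

variable {n : ℕ}

/-- Edge relation of a (continuous) skip list network: `u` and `v` are neighbors iff no node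
strictly between them has height at least `min (h u) (h v)`. -/
def IsEdge {α : Type*} [LinearOrder α] (h : Fin n → α) (u v : Fin n) : Prop :=
  u ≠ v ∧ ∀ x : Fin n, min u v < x → x < max u v → h x < min (h u) (h v)

/-- The greedy next hop from `x` towards destination `v`. -/
noncomputable def nextHop {α : Type*} [LinearOrder α] (h : Fin n → α) (v x : Fin n) : Fin n :=
  if x < v then (Finset.univ.filter fun y => IsEdge h x y ∧ x < y ∧ y ≤ v).max.unbotD x
  else if v < x then (Finset.univ.filter fun y => IsEdge h x y ∧ v ≤ y ∧ y < x).min.untopD x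
  else x

/-- The greedy routing path from `x` to `v`, with fuel. -/
noncomputable def routeAux {α : Type*} [LinearOrder α] (h : Fin n → α) (v : Fin n) :
    ℕ → Fin n → List (Fin n)
  | 0, x => [x]
  | fuel + 1, x => if x = v then [x] else x :: routeAux h v fuel (nextHop h v x)

/-- The greedy routing path from `u` to `v` (as a list of visited nodes, starting at `u`
and ending at `v`). -/
noncomputable def route {α : Type*} [LinearOrder α] (h : Fin n → α) (u v : Fin n) :
    List (Fin n) :=
  routeAux h v n u

/-- The routing path length (number of hops) from `u` to `v`. -/
noncomputable def dist {α : Type*} [LinearOrder α] (h : Fin n → α) (u v : Fin n) : ℕ :=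
  (route h u v).length - 1


/-- The degree of `u`: its number of neighbors. -/
noncomputable def degree {α : Type*} [LinearOrder α] (h : Fin n → α) (u : Fin n) : ℕ :=
  (Finset.univ.filter fun w => IsEdge h u w).card

/-- Total weighted communication cost of a skip list network. -/
noncomputable def cost {α : Type*} [LinearOrder α] (h : Fin n → α)
    (W : Fin n → Fin n → ℝ) : ℝ :=
  ∑ u : Fin n, ∑ v : Fin n, W u v * (dist h u v : ℝ)

/-- `L(x, h)`: the smallest `i ≤ x` such that all heights on `[i, x]` are at most `h x`. -/
noncomputable def Lv {α : Type*} [LinearOrder α] (h : Fin n → α) (x : Fin n) : Fin n :=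
  (Finset.univ.filter fun i : Fin n =>
    i ≤ x ∧ ∀ j : Fin n, i ≤ j → j ≤ x → h j ≤ h x).min.untopD x

/-- `R(x, h)`: the largest `i ≥ x` such that all heights on `[x, i]` are at most `h x`. -/
noncomputable def Rv {α : Type*} [LinearOrder α] (h : Fin n → α) (x : Fin n) : Fin n :=
  (Finset.univ.filter fun i : Fin n =>
    x ≤ i ∧ ∀ j : Fin n, x ≤ j → j ≤ i → h j ≤ h x).max.unbotD x

section Aux

variable (h : Fin n → ℕ)

/-- Basic properties of `Rv`: it is `≥ x`, all heights on `[x, Rv x]` are `≤ h x`,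
and it is maximal with this property. -/
lemma rv_spec (x : Fin n) :
    x ≤ Rv h x ∧ (∀ j : Fin n, x ≤ j → j ≤ Rv h x → h j ≤ h x) ∧
      (∀ i : Fin n, x ≤ i → (∀ j : Fin n, x ≤ j → j ≤ i → h j ≤ h x) → i ≤ Rv h x) := by
  classical
  have hxS : x ∈ (Finset.univ.filter fun i : Fin n =>
      x ≤ i ∧ ∀ j : Fin n, x ≤ j → j ≤ i → h j ≤ h x) := by
    simp only [Finset.mem_filter, Finset.mem_univ, true_and]
    exact ⟨le_refl x, fun j hj hj' => by
      have : j = x := le_antisymm hj' hj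
      rw [this]⟩
  obtain ⟨m, hm⟩ := Finset.max_of_nonempty ⟨x, hxS⟩
  have hRv : Rv h x = m := by
    unfold Rv; rw [hm]; exact WithBot.unbotD_coe x m
  have hmS := Finset.mem_of_max hm
  simp only [Finset.mem_filter, Finset.mem_univ, true_and] at hmS
  refine ⟨hRv ▸ hmS.1, fun j hj hj' => hmS.2 j hj (hRv ▸ hj'), fun i hi hprop => ?_⟩
  have hiS : i ∈ (Finset.univ.filter fun i : Fin n =>
      x ≤ i ∧ ∀ j : Fin n, x ≤ j → j ≤ i → h j ≤ h x) := by
    simp only [Finset.mem_filter, Finset.mem_univ, true_and]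
    exact ⟨hi, hprop⟩
  have := Finset.le_max hiS
  rw [hm] at this
  rw [hRv]
  exact_mod_cast this

/-- Basic properties of `Lv`: it is `≤ x`, all heights on `[Lv x, x]` are `≤ h x`,
and it is minimal with this property. -/
lemma lv_spec (x : Fin n) :
    Lv h x ≤ x ∧ (∀ j : Fin n, Lv h x ≤ j → j ≤ x → h j ≤ h x) ∧
      (∀ i : Fin n, i ≤ x → (∀ j : Fin n, i ≤ j → j ≤ x → h j ≤ h x) → Lv h x ≤ i) := by
  classical
  have hxS : x ∈ (Finset.univ.filter fun i : Fin n =>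
      i ≤ x ∧ ∀ j : Fin n, i ≤ j → j ≤ x → h j ≤ h x) := by
    simp only [Finset.mem_filter, Finset.mem_univ, true_and]
    exact ⟨le_refl x, fun j hj hj' => by
      have : j = x := le_antisymm hj' hj
      rw [this]⟩
  obtain ⟨m, hm⟩ := Finset.min_of_nonempty ⟨x, hxS⟩
  have hLv : Lv h x = m := by
    unfold Lv; rw [hm]; exact WithTop.untopD_coe x m
  have hmS := Finset.mem_of_min hm
  simp only [Finset.mem_filter, Finset.mem_univ, true_and] at hmS
  refine ⟨hLv ▸ hmS.1, fun j hj hj' => hmS.2 j (hLv ▸ hj) hj', fun i hi hprop => ?_⟩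
  have hiS : i ∈ (Finset.univ.filter fun i : Fin n =>
      i ≤ x ∧ ∀ j : Fin n, i ≤ j → j ≤ x → h j ≤ h x) := by
    simp only [Finset.mem_filter, Finset.mem_univ, true_and]
    exact ⟨hi, hprop⟩
  have := Finset.min_le hiS
  rw [hm] at this
  rw [hLv]
  exact_mod_cast this

/-- The node right after `Rv x` has height exceeding `h x`. -/
lemma rv_succ_high {x r1 : Fin n} (hr1 : (r1 : ℕ) = (Rv h x : ℕ) + 1) : h x < h r1 := by
  obtain ⟨hR1, hR2, hR3⟩ := rv_spec h x
  by_contra hle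
  push_neg at hle
  have hxr1 : x ≤ r1 := by
    have := Fin.le_def.mp hR1; rw [Fin.le_def]; omega
  have := hR3 r1 hxr1 (fun j hj hj' => by
    have hjv := Fin.le_def.mp hj'
    rcases Nat.lt_or_ge (j : ℕ) (r1 : ℕ) with hlt | hge
    · exact hR2 j hj (by rw [Fin.le_def]; omega)
    · have : j = r1 := Fin.ext (by omega)
      rw [this]; exact hle)
  have := Fin.le_def.mp this
  omega

/-- The node right before `Lv x` has height exceeding `h x`. -/
lemma lv_pred_high {x l : Fin n} (hl : (l : ℕ) + 1 = (Lv h x : ℕ)) : h x < h l := by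
  obtain ⟨hL1, hL2, hL3⟩ := lv_spec h x
  by_contra hle
  push_neg at hle
  have hlx : l ≤ x := by
    have := Fin.le_def.mp hL1; rw [Fin.le_def]; omega
  have := hL3 l hlx (fun j hj hj' => by
    have hjv := Fin.le_def.mp hj
    rcases Nat.lt_or_ge (l : ℕ) (j : ℕ) with hlt | hge
    · exact hL2 j (by rw [Fin.le_def]; omega) hj'
    · have : j = l := Fin.ext (by omega)
      rw [this]; exact hle)
  have := Fin.le_def.mp this
  omega

/-- Specification of the greedy next hop when moving to the right. -/
lemma nextHop_spec {v x : Fin n} (hxv : x < v) :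
    IsEdge h x (nextHop h v x) ∧ x < nextHop h v x ∧ nextHop h v x ≤ v ∧
      ∀ y : Fin n, IsEdge h x y → x < y → y ≤ v → y ≤ nextHop h v x := by
  classical
  have hxv' : (x : ℕ) < (v : ℕ) := hxv
  have hsn : (x : ℕ) + 1 < n := lt_of_le_of_lt hxv' v.isLt
  set s : Fin n := ⟨(x : ℕ) + 1, hsn⟩ with hs
  have hxs : x < s := by rw [Fin.lt_def]; simp [hs]
  have hedge : IsEdge h x s := by
    refine ⟨fun hc => by simp [Fin.ext_iff, hs] at hc, fun z hz1 hz2 => ?_⟩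
    rw [min_eq_left hxs.le] at hz1
    rw [max_eq_right hxs.le] at hz2
    have h1 := Fin.lt_def.mp hz1
    have h2 := Fin.lt_def.mp hz2
    simp [hs] at h2
    omega
  have hsS : s ∈ (Finset.univ.filter fun y => IsEdge h x y ∧ x < y ∧ y ≤ v) := by
    simp only [Finset.mem_filter, Finset.mem_univ, true_and]
    exact ⟨hedge, hxs, by rw [Fin.le_def]; simp [hs]; omega⟩
  obtain ⟨m, hm⟩ := Finset.max_of_nonempty ⟨s, hsS⟩
  have hnh : nextHop h v x = m := by
    unfold nextHop; rw [if_pos hxv, hm]; exact WithBot.unbotD_coe x m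
  have hmS := Finset.mem_of_max hm
  simp only [Finset.mem_filter, Finset.mem_univ, true_and] at hmS
  refine ⟨hnh ▸ hmS.1, hnh ▸ hmS.2.1, hnh ▸ hmS.2.2, fun y hy1 hy2 hy3 => ?_⟩
  have hyS : y ∈ (Finset.univ.filter fun y => IsEdge h x y ∧ x < y ∧ y ≤ v) := by
    simp only [Finset.mem_filter, Finset.mem_univ, true_and]
    exact ⟨hy1, hy2, hy3⟩
  have := Finset.le_max hyS
  rw [hm] at this
  rw [hnh]
  exact_mod_cast this

/-- The greedy step never jumps over `x` when either the destination is within the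
right block of `x` or the current node is within the left block of `x`. -/
lemma step1 {v x u : Fin n} (hux : u < x) (hxv : x ≤ v)
    (hcond : v ≤ Rv h x ∨ Lv h x ≤ u) : nextHop h v u ≤ x := by
  obtain ⟨hedge, hlt, hle, -⟩ := nextHop_spec h (lt_of_lt_of_le hux hxv)
  set y := nextHop h v u with hy
  by_contra hyx
  push_neg at hyx
  have hkey : h x < min (h u) (h y) := by
    refine hedge.2 x ?_ ?_
    · rw [min_eq_left hlt.le]; exact hux
    · rw [max_eq_right hlt.le]; exact hyx
  obtain ⟨hk1, hk2⟩ := lt_min_iff.mp hkey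
  rcases hcond with hvr | hlu
  · have : h y ≤ h x := (rv_spec h x).2.1 y hyx.le (le_trans hle hvr)
    omega
  · have : h u ≤ h x := (lv_spec h x).2.1 u hlu hux.le
    omega

/-- If the current node is strictly left of `Lv x` and the destination strictly right of
`Rv x`, then the greedy step never lands in the block `[Lv x, x]`. -/
lemma step2 {v x u : Fin n} (hul : u < Lv h x) (hrv : Rv h x < v) :
    ¬ (Lv h x ≤ nextHop h v u ∧ nextHop h v u ≤ x) := by
  obtain ⟨hL1, hL2, hL3⟩ := lv_spec h x
  obtain ⟨hR1, hR2, hR3⟩ := rv_spec h x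
  have huv : u < v := lt_of_lt_of_le hul (le_trans hL1 (le_trans hR1 hrv.le))
  obtain ⟨hedge, hlt, hle, hmax⟩ := nextHop_spec h huv
  set y := nextHop h v u with hy
  rintro ⟨h1, h2⟩
  have hulv : (u : ℕ) < (Lv h x : ℕ) := hul
  have hLx : (Lv h x : ℕ) ≤ (x : ℕ) := hL1
  have hxR : (x : ℕ) ≤ (Rv h x : ℕ) := hR1
  have hRv : (Rv h x : ℕ) < (v : ℕ) := hrv
  have hyx : h y ≤ h x := hL2 y h1 h2
  rcases Nat.lt_or_ge ((u : ℕ) + 1) (Lv h x : ℕ) with hcase | hcase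
  · -- u is strictly left of the predecessor `ℓ` of `Lv x`
    have hln : (Lv h x : ℕ) - 1 < n := lt_of_le_of_lt (by omega) (Lv h x).isLt
    set l : Fin n := ⟨(Lv h x : ℕ) - 1, hln⟩ with hldef
    have hlh : h x < h l := lv_pred_high h (by simp [hldef]; omega)
    have hkey : h l < min (h u) (h y) := by
      refine hedge.2 l ?_ ?_
      · rw [min_eq_left hlt.le, Fin.lt_def]; simp [hldef]; omega
      · rw [max_eq_right hlt.le, Fin.lt_def]
        have := Fin.le_def.mp h1
        simp [hldef]; omega
    obtain ⟨-, hk2⟩ := lt_min_iff.mp hkey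
    omega
  · -- u is exactly the predecessor of `Lv x`
    have huh : h x < h u := lv_pred_high h (by omega)
    have hr1n : (Rv h x : ℕ) + 1 < n := lt_of_le_of_lt (by omega) v.isLt
    set r1 : Fin n := ⟨(Rv h x : ℕ) + 1, hr1n⟩ with hr1def
    have hr1h : h x < h r1 := rv_succ_high h (by simp [hr1def])
    have hur1 : u < r1 := by rw [Fin.lt_def]; simp [hr1def]; omega
    have hedge' : IsEdge h u r1 := by
      refine ⟨fun hc => by simp [Fin.ext_iff, hr1def] at hc; omega, fun z hz1 hz2 => ?_⟩
      rw [min_eq_left hur1.le] at hz1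
      rw [max_eq_right hur1.le] at hz2
      have hz1' := Fin.lt_def.mp hz1
      have hz2' := Fin.lt_def.mp hz2
      simp [hr1def] at hz2'
      have hzx : h z ≤ h x := by
        rcases le_total z x with hzle | hzge
        · exact hL2 z (by rw [Fin.le_def]; omega) hzle
        · exact hR2 z hzge (by rw [Fin.le_def]; omega)
      exact lt_of_le_of_lt hzx (lt_min huh hr1h)
    have := hmax r1 hedge' hur1 (by rw [Fin.le_def]; simp [hr1def]; omega)
    have hc1 := Fin.le_def.mp this
    have hc2 := Fin.le_def.mp h2
    simp [hr1def] at hc1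
    omega

/-- `routeAux` always starts with its starting point. -/
lemma routeAux_cons (fuel : ℕ) (v u : Fin n) : ∃ t, routeAux h v fuel u = u :: t := by
  cases fuel with
  | zero => exact ⟨[], rfl⟩
  | succ f =>
    by_cases hc : u = v
    · exact ⟨[], by simp [routeAux, hc]⟩
    · exact ⟨routeAux h v f (nextHop h v u), by simp [routeAux, hc]⟩

/-- The key characterization of the tail of the greedy route. -/
lemma mem_routeAux_tail : ∀ fuel : ℕ, ∀ u v : Fin n, u ≤ v → (v : ℕ) - (u : ℕ) ≤ fuel →
    ∀ x : Fin n, x ∈ (routeAux h v fuel u).tail ↔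
      (u < x ∧ x ≤ v ∧ (v ≤ Rv h x ∨ Lv h x ≤ u)) := by
  intro fuel
  induction fuel with
  | zero =>
    intro u v huv hfuel x
    have huv' : (u : ℕ) ≤ (v : ℕ) := huv
    have : u = v := Fin.ext (by omega)
    subst this
    simp only [routeAux, List.tail_cons, List.not_mem_nil, false_iff]
    rintro ⟨a, b, -⟩
    exact absurd (lt_of_lt_of_le a b) (lt_irrefl u)
  | succ f ih =>
    intro u v huv hfuel x
    by_cases hev : u = v
    · subst hev
      have htl : (routeAux h u (f + 1) u).tail = [] := by simp [routeAux]
      rw [htl]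
      simp only [List.not_mem_nil, false_iff]
      rintro ⟨a, b, -⟩
      exact absurd (lt_of_lt_of_le a b) (lt_irrefl u)
    · have huv' : u < v := lt_of_le_of_ne huv hev
      obtain ⟨hedge, hlt, hle, hmax⟩ := nextHop_spec h huv'
      set u' := nextHop h v u with hu'
      have htail : (routeAux h v (f + 1) u).tail = routeAux h v f u' := by
        simp [routeAux, hev, hu']
      rw [htail]
      obtain ⟨t, ht⟩ := routeAux_cons h f v u'
      have huu' : (u : ℕ) < (u' : ℕ) := hlt
      have ihspec := ih u' v hle (by omega) x
      have hmem : x ∈ routeAux h v f u' ↔ x = u' ∨ x ∈ (routeAux h v f u').tail := by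
        rw [ht]; simp
      rw [hmem, ihspec]
      constructor
      · rintro (rfl | ⟨h1, h2, h3⟩)
        · refine ⟨hlt, hle, ?_⟩
          by_contra hc
          push_neg at hc
          obtain ⟨hc1, hc2⟩ := hc
          exact step2 h hc2 hc1 ⟨(lv_spec h u').1, le_refl u'⟩
        · refine ⟨lt_trans (Fin.lt_def.mpr huu') h1, h2, ?_⟩
          rcases h3 with hc | hc
          · exact Or.inl hc
          · by_contra hcc
            push_neg at hcc
            obtain ⟨hcc1, hcc2⟩ := hcc
            exact step2 h hcc2 hcc1 ⟨hc, h1.le⟩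
      · rintro ⟨h1, h2, h3⟩
        have hstep : u' ≤ x := step1 h h1 h2 h3
        rcases eq_or_lt_of_le hstep with heq | hlt'
        · exact Or.inl heq.symm
        · refine Or.inr ⟨hlt', h2, ?_⟩
          rcases h3 with hc | hc
          · exact Or.inl hc
          · exact Or.inr (le_trans hc (le_of_lt (Fin.lt_def.mpr huu')))

end Aux

/-- If `h` is an optimal height assignment for the Optimum Static Skip List Network problem
`OSSLN(V, W)`, then for every vertex `x`, the set `P_x(h)` of pairs `(u, v)` (with `u < v`)
whose routing path from `u` to `v` contains `x` (excluding the source `u`) equals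
`{(u,v) : u < x ∧ x ≤ v ≤ R(x,h)} ∪ {(u,v) : L(x,h) ≤ u < x ∧ v > R(x,h)}`. -/
theorem ossln_optimal_path_membership
    (n : ℕ) (W : Fin n → Fin n → ℝ) (hW : ∀ u v, 0 ≤ W u v)
    (h : Fin n → ℕ) (hpos : ∀ i, 1 ≤ h i)
    (hopt : ∀ g : Fin n → ℕ, (∀ i, 1 ≤ g i) → cost h W ≤ cost g W) :
    ∀ x : Fin n,
      {p : Fin n × Fin n | p.1 < p.2 ∧ x ∈ (route h p.1 p.2).tail} =
      {p : Fin n × Fin n | p.1 < x ∧ x ≤ p.2 ∧ p.2 ≤ Rv h x} ∪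
      {p : Fin n × Fin n | Lv h x ≤ p.1 ∧ p.1 < x ∧ Rv h x < p.2} := by
  intro x
  ext ⟨u, v⟩
  simp only [Set.mem_setOf_eq, Set.mem_union]
  constructor
  · rintro ⟨huv, hx⟩
    rw [route, mem_routeAux_tail h n u v huv.le (by omega) x] at hx
    obtain ⟨h1, h2, h3⟩ := hx
    by_cases hvr : v ≤ Rv h x
    · exact Or.inl ⟨h1, h2, hvr⟩
    · rcases h3 with hc | hc
      · exact absurd hc hvr
      · exact Or.inr ⟨hc, h1, lt_of_not_ge hvr⟩
  · rintro (⟨h1, h2, h3⟩ | ⟨h1, h2, h3⟩)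
    · have huv : u < v := lt_of_lt_of_le h1 h2
      refine ⟨huv, ?_⟩
      rw [route, mem_routeAux_tail h n u v huv.le (by omega) x]
      exact ⟨h1, h2, Or.inl h3⟩
    · have hxv : x < v := lt_of_le_of_lt (rv_spec h x).1 h3
      have huv : u < v := lt_trans h2 hxv
      refine ⟨huv, ?_⟩
      rw [route, mem_routeAux_tail h n u v huv.le (by omega) x]
      exact ⟨h2, hxv.le, Or.inr h1⟩

end P2P
end

section
/- Fix n, a nonnegative demand matrix W, and a height bound h_max. For integers 1 ≤ nl ≤ l ≤ r ≤ nr ≤ n and 1 ≤ h ≤ h_max, let OSSLN(l,r,nl,nr,h,W) denote the minimum, over height assignments to the vertices of [l,r] with values in {1,…,h} (where nl is the leftmost vertex such that all vertices of [nl,l] have height ≤ h and nr is the rightmost vertex such that all vertices of [r,nr] have height ≤ h), of the total cost contributed by the vertices of [l,r], where the contribution of a vertex x is Σ_{u<x} Σ_{v∈[x,R(x,h)]} W(u,v) + Σ_{u∈[L(x,h),x)} Σ_{v>R(x,h)} W(u,v). Then the recurrence OSSLN(l,r,nl,nr,h,W) = min( OSSLN(l,r,l,r,h−1,W), min_{x∈[l,r]}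 [ OSSLN(l,x−1,nl,nr,h,W) + OSSLN(x+1,r,nl,nr,h,W) + Σ_{u<x} Σ_{v∈[x,nr]} W(u,v) + Σ_{u∈[nl,x)} Σ_{v>nr} W(u,v) ] ) holds for all such (nl,l,r,nr,h). -/
open scoped Classical

namespace OSSLN

/-- `L(x, F)`: the smallest vertex `i ∈ [1, x]` such that all heights on `[i, x]` are at most
`F x`. -/
noncomputable def Lgen {α : Type*} [LinearOrder α] (F : ℕ → α) (x : ℕ) : ℕ :=
  sInf {i : ℕ | 1 ≤ i ∧ i ≤ x ∧ ∀ j, i ≤ j → j ≤ x → F j ≤ F x}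

/-- `R(x, F)`: the largest vertex `i ∈ [x, n]` such that all heights on `[x, i]` are at most
`F x`. -/
noncomputable def Rgen {α : Type*} [LinearOrder α] (n : ℕ) (F : ℕ → α) (x : ℕ) : ℕ :=
  sSup {i : ℕ | x ≤ i ∧ i ≤ n ∧ ∀ j, x ≤ j → j ≤ i → F j ≤ F x}

/-- Contribution of vertex `x` to the total cost:
`∑_{u<x} ∑_{v∈[x,R(x)]} W u v + ∑_{u∈[L(x),x)} ∑_{v>R(x)} W u v`. -/
noncomputable def contrib {α : Type*} [LinearOrder α] (n : ℕ) (W : ℕ → ℕ → ℝ)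
    (F : ℕ → α) (x : ℕ) : ℝ :=
  (∑ u ∈ Finset.Icc 1 (x - 1), ∑ v ∈ Finset.Icc x (Rgen n F x), W u v) +
    ∑ u ∈ Finset.Icc (Lgen F x) (x - 1), ∑ v ∈ Finset.Icc (Rgen n F x + 1) n, W u v

/-- The height profile of the subproblem `(l, r, nl, nr, hb)`: inside `[l, r]` the heights are
given by the assignment `f`; the vertices of `[nl, l) ∪ (r, nr]` have height (at most) `hb`;
all other vertices have height exceeding `hb`. -/
def extHeight (l r nl nr hb : ℕ) (f : ℕ → ℕ) (j : ℕ) : ℕ :=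
  if l ≤ j ∧ j ≤ r then f j
  else if (nl ≤ j ∧ j < l) ∨ (r < j ∧ j ≤ nr) then hb
  else hb + 1

/-- `OSSLN(l, r, nl, nr, hb, W)`: the minimum, over height assignments of the vertices of
`[l, r]` with values in `{1, …, hb}` (where `nl` is the leftmost vertex such that all vertices
of `[nl, l]` have height at most `hb`, and `nr` is the rightmost vertex such that all vertices
of `[r, nr]` have height at most `hb`), of the total cost contributed by the vertices of
`[l, r]` (value `⊤` if no such assignment exists). -/
noncomputable def osslnB (n l r nl nr hb : ℕ) (W : ℕ → ℕ → ℝ) : EReal :=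
  sInf { c : EReal | ∃ f : ℕ → ℕ, (∀ j, l ≤ j → j ≤ r → 1 ≤ f j ∧ f j ≤ hb) ∧
    c = ((∑ x ∈ Finset.Icc l r, contrib n W (extHeight l r nl nr hb f) x : ℝ) : EReal) }

lemma Lgen_congr {F G : ℕ → ℕ} {x : ℕ}
    (h : ∀ i, 1 ≤ i → i ≤ x →
      ((∀ j, i ≤ j → j ≤ x → F j ≤ F x) ↔ (∀ j, i ≤ j → j ≤ x → G j ≤ G x))) :
    Lgen F x = Lgen G x := by
  unfold Lgen
  congr 1
  ext i
  simp only [Set.mem_setOf_eq]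
  constructor
  · rintro ⟨h1, h2, h3⟩
    exact ⟨h1, h2, (h i h1 h2).1 h3⟩
  · rintro ⟨h1, h2, h3⟩
    exact ⟨h1, h2, (h i h1 h2).2 h3⟩

lemma Rgen_congr {F G : ℕ → ℕ} {n x : ℕ}
    (h : ∀ i, x ≤ i → i ≤ n →
      ((∀ j, x ≤ j → j ≤ i → F j ≤ F x) ↔ (∀ j, x ≤ j → j ≤ i → G j ≤ G x))) :
    Rgen n F x = Rgen n G x := by
  unfold Rgen
  congr 1
  ext i
  simp only [Set.mem_setOf_eq]
  constructor
  · rintro ⟨h1, h2, h3⟩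
    exact ⟨h1, h2, (h i h1 h2).1 h3⟩
  · rintro ⟨h1, h2, h3⟩
    exact ⟨h1, h2, (h i h1 h2).2 h3⟩

lemma contrib_congr {n x : ℕ} {W : ℕ → ℕ → ℝ} {F G : ℕ → ℕ}
    (hL : Lgen F x = Lgen G x) (hR : Rgen n F x = Rgen n G x) :
    contrib n W F x = contrib n W G x := by
  unfold contrib; rw [hL, hR]

lemma Lgen_eq {F : ℕ → ℕ} {x a : ℕ} (ha1 : 1 ≤ a) (hax : a ≤ x)
    (hall : ∀ j, a ≤ j → j ≤ x → F j ≤ F x)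
    (hblock : a = 1 ∨ ¬ F (a - 1) ≤ F x) : Lgen F x = a := by
  have hmem : a ∈ {i : ℕ | 1 ≤ i ∧ i ≤ x ∧ ∀ j, i ≤ j → j ≤ x → F j ≤ F x} :=
    ⟨ha1, hax, hall⟩
  have hlb : ∀ i ∈ {i : ℕ | 1 ≤ i ∧ i ≤ x ∧ ∀ j, i ≤ j → j ≤ x → F j ≤ F x}, a ≤ i := by
    rintro i ⟨h1, h2, h3⟩
    by_contra hcon
    push_neg at hcon
    rcases hblock with rfl | hb
    · omega
    · exact hb (h3 (a - 1) (by omega) (by omega))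
  exact le_antisymm (csInf_le (OrderBot.bddBelow _) hmem) (le_csInf ⟨a, hmem⟩ hlb)

lemma Rgen_eq {F : ℕ → ℕ} {n x b : ℕ} (hxb : x ≤ b) (hbn : b ≤ n)
    (hall : ∀ j, x ≤ j → j ≤ b → F j ≤ F x)
    (hblock : b = n ∨ ¬ F (b + 1) ≤ F x) : Rgen n F x = b := by
  have hmem : b ∈ {i : ℕ | x ≤ i ∧ i ≤ n ∧ ∀ j, x ≤ j → j ≤ i → F j ≤ F x} :=
    ⟨hxb, hbn, hall⟩
  have hub : ∀ i ∈ {i : ℕ | x ≤ i ∧ i ≤ n ∧ ∀ j, x ≤ j → j ≤ i → F j ≤ F x}, i ≤ b := by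
    rintro i ⟨h1, h2, h3⟩
    by_contra hcon
    push_neg at hcon
    rcases hblock with rfl | hb
    · omega
    · exact hb (h3 (b + 1) (by omega) (by omega))
  exact le_antisymm (csSup_le ⟨b, hmem⟩ hub) (le_csSup ⟨b, fun i hi => hub i hi⟩ hmem)

lemma ext_in {l r nl nr hb : ℕ} {f : ℕ → ℕ} {j : ℕ} (h1 : l ≤ j) (h2 : j ≤ r) :
    extHeight l r nl nr hb f j = f j := by
  simp [extHeight, h1, h2]

lemma ext_mid {l r nl nr hb : ℕ} {f : ℕ → ℕ} {j : ℕ}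
    (h : (nl ≤ j ∧ j < l) ∨ (r < j ∧ j ≤ nr)) : extHeight l r nl nr hb f j = hb := by
  unfold extHeight
  rw [if_neg (by omega), if_pos h]

lemma ext_out {l r nl nr hb : ℕ} {f : ℕ → ℕ} {j : ℕ} (hnl : nl ≤ l) (hlr : l ≤ r)
    (hr : r ≤ nr) (h : j < nl ∨ nr < j) : extHeight l r nl nr hb f j = hb + 1 := by
  unfold extHeight
  rw [if_neg (by omega), if_neg (by omega)]

lemma ext_le {l r nl nr hb : ℕ} {f : ℕ → ℕ} {j : ℕ} (hnl : nl ≤ l) (hr : r ≤ nr)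
    (hf : ∀ j, l ≤ j → j ≤ r → f j ≤ hb) (h1 : nl ≤ j) (h2 : j ≤ nr) :
    extHeight l r nl nr hb f j ≤ hb := by
  unfold extHeight
  split_ifs with hA hB
  · exact hf j hA.1 hA.2
  · exact le_refl hb
  · omega

lemma ext_congr {l r nl nr hb : ℕ} {f g : ℕ → ℕ}
    (h : ∀ j, l ≤ j → j ≤ r → f j = g j) :
    extHeight l r nl nr hb f = extHeight l r nl nr hb g := by
  funext j
  unfold extHeight
  split_ifs with hA
  · exact h j hA.1 hA.2
  · rfl
  · rfl


section PerVertex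

variable {n : ℕ} {W : ℕ → ℕ → ℝ} {nl l r nr hb : ℕ} {f : ℕ → ℕ} {x y : ℕ}

/-- Per-vertex contribution equality for the "max height < hb" branch. -/
lemma contribA (h1 : 1 ≤ nl) (hnl : nl ≤ l) (hlr : l ≤ r) (hrnr : r ≤ nr) (hb1 : 1 ≤ hb)
    (hf : ∀ j, l ≤ j → j ≤ r → f j ≤ hb - 1)
    (hy1 : l ≤ y) (hy2 : y ≤ r) :
    contrib n W (extHeight l r nl nr hb f) y
      = contrib n W (extHeight l r l r (hb - 1) f) y := by
  set F := extHeight l r nl nr hb f with hF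
  set G := extHeight l r l r (hb - 1) f with hG
  have hFy : F y = f y := ext_in hy1 hy2
  have hGy : G y = f y := ext_in hy1 hy2
  have key : ∀ j, (F j ≤ F y ↔ G j ≤ G y) := by
    intro j
    rw [hFy, hGy]
    by_cases hj : l ≤ j ∧ j ≤ r
    · rw [show F j = f j from ext_in hj.1 hj.2, show G j = f j from ext_in hj.1 hj.2]
    · have hGj : G j = (hb - 1) + 1 := ext_out le_rfl hlr le_rfl (by omega)
      have hFj : F j = hb ∨ F j = hb + 1 := by
        by_cases hmid : (nl ≤ j ∧ j < l) ∨ (r < j ∧ j ≤ nr)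
        · exact Or.inl (ext_mid hmid)
        · exact Or.inr (ext_out hnl hlr hrnr (by omega))
      have hfy : f y ≤ hb - 1 := hf y hy1 hy2
      constructor <;> intro hc <;> omega
  refine contrib_congr (Lgen_congr ?_) (Rgen_congr ?_) <;>
    · intro i _ _
      constructor <;> intro h3 j hj1 hj2
      · exact (key j).1 (h3 j hj1 hj2)
      · exact (key j).2 (h3 j hj1 hj2)

/-- Per-vertex contribution equality for the left subinterval `[l, x-1]`. -/
lemma contribBL (h1 : 1 ≤ nl) (hnl : nl ≤ l) (hxr : x ≤ r) (hrnr : r ≤ nr)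
    (hf : ∀ j, l ≤ j → j ≤ r → f j ≤ hb) (hfx : f x = hb)
    (hy1 : l ≤ y) (hy2 : y ≤ x - 1) :
    contrib n W (extHeight l r nl nr hb f) y
      = contrib n W (extHeight l (x - 1) nl nr hb f) y := by
  have hx1 : 1 ≤ x := by omega
  have hlx : l ≤ x - 1 := by omega
  have hlr : l ≤ r := by omega
  set F := extHeight l r nl nr hb f with hF
  set G := extHeight l (x - 1) nl nr hb f with hG
  have hFy : F y = f y := ext_in hy1 (by omega)
  have hGy : G y = f y := ext_in hy1 hy2
  have keyL : ∀ j, j ≤ y → F j = G j := by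
    intro j hj
    by_cases hjl : l ≤ j
    · rw [show F j = f j from ext_in hjl (by omega),
        show G j = f j from ext_in hjl (by omega)]
    · by_cases hjnl : nl ≤ j
      · rw [show F j = hb from ext_mid (Or.inl ⟨hjnl, by omega⟩),
          show G j = hb from ext_mid (Or.inl ⟨hjnl, by omega⟩)]
      · rw [show F j = hb + 1 from ext_out hnl hlr hrnr (by omega),
          show G j = hb + 1 from ext_out hnl hlx (by omega) (by omega)]
  have hL : Lgen F y = Lgen G y := by
    apply Lgen_congr
    intro i _ _
    have hy : F y = G y := keyL y le_rfl
    constructor <;> intro h3 j hj1 hj2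
    · rw [← keyL j hj2, ← hy]; exact h3 j hj1 hj2
    · rw [keyL j hj2, hy]; exact h3 j hj1 hj2
  have hR : Rgen n F y = Rgen n G y := by
    apply Rgen_congr
    intro i hi1 hi2
    by_cases hcase : f y = hb
    · have pt : ∀ j, y ≤ j → (F j ≤ F y ↔ G j ≤ G y) := by
        intro j hj1
        rw [hFy, hGy, hcase]
        by_cases hjnr : j ≤ nr
        · have hFj : F j ≤ hb := ext_le hnl hrnr hf (by omega) hjnr
          have hGj : G j ≤ hb :=
            ext_le hnl (by omega) (fun j a b => hf j a (by omega)) (by omega) hjnr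
          exact iff_of_true hFj hGj
        · have hFj : F j = hb + 1 := ext_out hnl hlr hrnr (by omega)
          have hGj : G j = hb + 1 := ext_out hnl hlx (by omega) (by omega)
          constructor <;> intro hc <;> omega
      constructor <;> intro h3 j hj1 hj2
      · exact (pt j hj1).1 (h3 j hj1 hj2)
      · exact (pt j hj1).2 (h3 j hj1 hj2)
    · have hfy : f y ≤ hb := hf y hy1 (by omega)
      by_cases hix : x ≤ i
      · have hFx : F x = hb := by rw [show F x = f x from ext_in (by omega) hxr, hfx]
        have hGx : G x = hb := ext_mid (Or.inr ⟨by omega, by omega⟩)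
        constructor <;> intro h3
        · exfalso
          have := h3 x (by omega) hix
          rw [hFx, hFy] at this; omega
        · exfalso
          have := h3 x (by omega) hix
          rw [hGx, hGy] at this; omega
      · have pt : ∀ j, y ≤ j → j ≤ i → F j = G j := by
          intro j hj1 hj2
          rw [show F j = f j from ext_in (by omega) (by omega),
            show G j = f j from ext_in (by omega) (by omega)]
        constructor <;> intro h3 j hj1 hj2
        · rw [← pt j hj1 hj2, hGy, ← hFy]; exact h3 j hj1 hj2
        · rw [pt j hj1 hj2, hFy, ← hGy]; exact h3 j hj1 hj2
  exact contrib_congr hL hR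


/-- Per-vertex contribution equality for the right subinterval `[x+1, r]`. -/
lemma contribBR (h1 : 1 ≤ nl) (hnl : nl ≤ l) (hlx : l ≤ x) (hrnr : r ≤ nr)
    (hf : ∀ j, l ≤ j → j ≤ r → f j ≤ hb) (hfx : f x = hb)
    (hy1 : x + 1 ≤ y) (hy2 : y ≤ r) :
    contrib n W (extHeight l r nl nr hb f) y
      = contrib n W (extHeight (x + 1) r nl nr hb f) y := by
  have hlr : l ≤ r := by omega
  have hnl' : nl ≤ x + 1 := by omega
  set F := extHeight l r nl nr hb f with hF
  set G := extHeight (x + 1) r nl nr hb f with hG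
  have hFy : F y = f y := ext_in (by omega) hy2
  have hGy : G y = f y := ext_in hy1 hy2
  have keyR : ∀ j, y ≤ j → F j = G j := by
    intro j hj
    by_cases hjr : j ≤ r
    · rw [show F j = f j from ext_in (by omega) hjr,
        show G j = f j from ext_in (by omega) hjr]
    · by_cases hjnr : j ≤ nr
      · rw [show F j = hb from ext_mid (Or.inr ⟨by omega, hjnr⟩),
          show G j = hb from ext_mid (Or.inr ⟨by omega, hjnr⟩)]
      · rw [show F j = hb + 1 from ext_out hnl hlr hrnr (by omega),
          show G j = hb + 1 from ext_out hnl' (by omega) hrnr (by omega)]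
  have hR : Rgen n F y = Rgen n G y := by
    apply Rgen_congr
    intro i _ _
    have hy : F y = G y := keyR y le_rfl
    constructor <;> intro h3 j hj1 hj2
    · rw [← keyR j hj1, ← hy]; exact h3 j hj1 hj2
    · rw [keyR j hj1, hy]; exact h3 j hj1 hj2
  have hL : Lgen F y = Lgen G y := by
    apply Lgen_congr
    intro i hi1 hi2
    by_cases hcase : f y = hb
    · have pt : ∀ j, j ≤ y → (F j ≤ F y ↔ G j ≤ G y) := by
        intro j hj1
        rw [hFy, hGy, hcase]
        by_cases hjnl : nl ≤ j
        · have hFj : F j ≤ hb := ext_le hnl hrnr hf hjnl (by omega)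
          have hGj : G j ≤ hb :=
            ext_le hnl' hrnr (fun j a b => hf j (by omega) b) hjnl (by omega)
          exact iff_of_true hFj hGj
        · have hFj : F j = hb + 1 := ext_out hnl hlr hrnr (by omega)
          have hGj : G j = hb + 1 := ext_out hnl' (by omega) hrnr (by omega)
          constructor <;> intro hc <;> omega
      constructor <;> intro h3 j hj1 hj2
      · exact (pt j hj2).1 (h3 j hj1 hj2)
      · exact (pt j hj2).2 (h3 j hj1 hj2)
    · have hfy : f y ≤ hb := hf y (by omega) hy2
      by_cases hix : i ≤ x
      · have hFx : F x = hb := by rw [show F x = f x from ext_in hlx (by omega), hfx]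
        have hGx : G x = hb := ext_mid (Or.inl ⟨by omega, by omega⟩)
        constructor <;> intro h3
        · exfalso
          have := h3 x hix (by omega)
          rw [hFx, hFy] at this; omega
        · exfalso
          have := h3 x hix (by omega)
          rw [hGx, hGy] at this; omega
      · have pt : ∀ j, i ≤ j → j ≤ y → F j = G j := by
          intro j hj1 hj2
          rw [show F j = f j from ext_in (by omega) (by omega),
            show G j = f j from ext_in (by omega) (by omega)]
        constructor <;> intro h3 j hj1 hj2
        · rw [← pt j hj1 hj2, hGy, ← hFy]; exact h3 j hj1 hj2
        · rw [pt j hj1 hj2, hFy, ← hGy]; exact h3 j hj1 hj2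
  exact contrib_congr hL hR

/-- Contribution of the pivot vertex. -/
lemma contribP (h1 : 1 ≤ nl) (hnl : nl ≤ l) (hlx : l ≤ x) (hxr : x ≤ r) (hrnr : r ≤ nr)
    (hnrn : nr ≤ n) (hf : ∀ j, l ≤ j → j ≤ r → f j ≤ hb) (hfx : f x = hb) :
    contrib n W (extHeight l r nl nr hb f) x
      = (∑ u ∈ Finset.Icc 1 (x - 1), ∑ v ∈ Finset.Icc x nr, W u v) +
        ∑ u ∈ Finset.Icc nl (x - 1), ∑ v ∈ Finset.Icc (nr + 1) n, W u v := by
  have hlr : l ≤ r := by omega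
  set F := extHeight l r nl nr hb f with hF
  have hFx : F x = hb := by rw [show F x = f x from ext_in hlx hxr, hfx]
  have hL : Lgen F x = nl := by
    apply Lgen_eq h1 (by omega)
    · intro j hj1 hj2
      rw [hFx]
      exact ext_le hnl hrnr hf hj1 (by omega)
    · by_cases hnl1 : nl = 1
      · exact Or.inl hnl1
      · refine Or.inr ?_
        rw [show F (nl - 1) = hb + 1 from ext_out hnl hlr hrnr (by omega), hFx]
        omega
  have hR : Rgen n F x = nr := by
    apply Rgen_eq (by omega) hnrn
    · intro j hj1 hj2
      rw [hFx]
      exact ext_le hnl hrnr hf (by omega) hj2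
    · by_cases hnrn' : nr = n
      · exact Or.inl hnrn'
      · refine Or.inr ?_
        rw [show F (nr + 1) = hb + 1 from ext_out hnl hlr hrnr (by omega), hFx]
        omega
  unfold contrib
  rw [hL, hR]

end PerVertex

noncomputable def cost (n : ℕ) (W : ℕ → ℕ → ℝ) (l r nl nr hb : ℕ) (f : ℕ → ℕ) : ℝ :=
  ∑ z ∈ Finset.Icc l r, contrib n W (extHeight l r nl nr hb f) z

section Cost

variable {n : ℕ} {W : ℕ → ℕ → ℝ} {nl l r nr hb : ℕ} {f : ℕ → ℕ} {x : ℕ}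

lemma contrib_nonneg (hW : ∀ u v, 0 ≤ W u v) (F : ℕ → ℕ) (z : ℕ) :
    0 ≤ contrib n W F z := by
  unfold contrib
  have h : ∀ (s t : Finset ℕ), 0 ≤ ∑ u ∈ s, ∑ v ∈ t, W u v := fun s t =>
    Finset.sum_nonneg fun u _ => Finset.sum_nonneg fun v _ => hW u v
  exact add_nonneg (h _ _) (h _ _)

lemma cost_nonneg (hW : ∀ u v, 0 ≤ W u v) : 0 ≤ cost n W l r nl nr hb f :=
  Finset.sum_nonneg fun z _ => contrib_nonneg hW _ z

lemma cost_lower (h1 : 1 ≤ nl) (hnl : nl ≤ l) (hlr : l ≤ r) (hrnr : r ≤ nr) (hb1 : 1 ≤ hb)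
    (hf : ∀ j, l ≤ j → j ≤ r → f j ≤ hb - 1) :
    cost n W l r nl nr hb f = cost n W l r l r (hb - 1) f :=
  Finset.sum_congr rfl fun y hy => by
    rw [Finset.mem_Icc] at hy
    exact contribA h1 hnl hlr hrnr hb1 hf hy.1 hy.2

lemma cost_split (h1 : 1 ≤ nl) (hnl : nl ≤ l) (hrnr : r ≤ nr) (hnrn : nr ≤ n)
    (hlx : l ≤ x) (hxr : x ≤ r)
    (hf : ∀ j, l ≤ j → j ≤ r → f j ≤ hb) (hfx : f x = hb) :
    cost n W l r nl nr hb f =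
      cost n W l (x - 1) nl nr hb f + cost n W (x + 1) r nl nr hb f +
        ((∑ u ∈ Finset.Icc 1 (x - 1), ∑ v ∈ Finset.Icc x nr, W u v) +
          ∑ u ∈ Finset.Icc nl (x - 1), ∑ v ∈ Finset.Icc (nr + 1) n, W u v) := by
  have hx1 : 1 ≤ x := by omega
  have hsplit : Finset.Icc l r = Finset.Icc l (x - 1) ∪ insert x (Finset.Icc (x + 1) r) := by
    ext a
    simp only [Finset.mem_Icc, Finset.mem_union, Finset.mem_insert]
    omega
  have hdisj : Disjoint (Finset.Icc l (x - 1)) (insert x (Finset.Icc (x + 1) r)) := by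
    rw [Finset.disjoint_left]
    intro a ha hb
    rw [Finset.mem_Icc] at ha
    rcases Finset.mem_insert.1 hb with rfl | hb'
    · omega
    · rw [Finset.mem_Icc] at hb'; omega
  have hnot : x ∉ Finset.Icc (x + 1) r := by
    rw [Finset.mem_Icc]; omega
  show (∑ z ∈ Finset.Icc l r, contrib n W (extHeight l r nl nr hb f) z) = _
  rw [hsplit, Finset.sum_union hdisj, Finset.sum_insert hnot]
  have hLeq : (∑ z ∈ Finset.Icc l (x - 1), contrib n W (extHeight l r nl nr hb f) z)
      = cost n W l (x - 1) nl nr hb f :=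
    Finset.sum_congr rfl fun y hy => by
      rw [Finset.mem_Icc] at hy
      exact contribBL h1 hnl hxr hrnr hf hfx hy.1 hy.2
  have hReq : (∑ z ∈ Finset.Icc (x + 1) r, contrib n W (extHeight l r nl nr hb f) z)
      = cost n W (x + 1) r nl nr hb f :=
    Finset.sum_congr rfl fun y hy => by
      rw [Finset.mem_Icc] at hy
      exact contribBR h1 hnl hlx hrnr hf hfx hy.1 hy.2
  rw [hLeq, hReq, contribP h1 hnl hlx hxr hrnr hnrn hf hfx]
  ring

end Cost

lemma ereal_le_of_forall_add (e : EReal) (t : ℝ)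
    (h : ∀ ε : ℝ, 0 < ε → e ≤ ((t + ε : ℝ) : EReal)) : e ≤ (t : EReal) := by
  induction e using EReal.rec with
  | bot => exact bot_le
  | coe u =>
      rw [EReal.coe_le_coe_iff]
      by_contra hlt
      push_neg at hlt
      have h2 := h ((u - t) / 2) (by linarith)
      rw [EReal.coe_le_coe_iff] at h2
      linarith
  | top =>
      have h2 := h 1 one_pos
      exact absurd h2 (by exact (EReal.coe_lt_top _).not_ge)

section OsslnAPI

variable {n : ℕ} {W : ℕ → ℕ → ℝ} {nl l r nr hb : ℕ}

lemma osslnB_le (f : ℕ → ℕ) (hfeas : ∀ j, l ≤ j → j ≤ r → 1 ≤ f j ∧ f j ≤ hb) :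
    osslnB n l r nl nr hb W ≤ ((cost n W l r nl nr hb f : ℝ) : EReal) := by
  unfold osslnB
  exact sInf_le ⟨f, hfeas, rfl⟩

lemma le_osslnB {e : EReal}
    (h : ∀ f : ℕ → ℕ, (∀ j, l ≤ j → j ≤ r → 1 ≤ f j ∧ f j ≤ hb) →
      e ≤ ((cost n W l r nl nr hb f : ℝ) : EReal)) :
    e ≤ osslnB n l r nl nr hb W := by
  unfold osslnB
  refine le_sInf ?_
  rintro c ⟨f, hf, rfl⟩
  exact h f hf

lemma osslnB_lt_exists {b : EReal} (h : osslnB n l r nl nr hb W < b) :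
    ∃ f : ℕ → ℕ, (∀ j, l ≤ j → j ≤ r → 1 ≤ f j ∧ f j ≤ hb) ∧
      ((cost n W l r nl nr hb f : ℝ) : EReal) < b := by
  unfold osslnB at h
  obtain ⟨c, hc, hlt⟩ := sInf_lt_iff.mp h
  obtain ⟨f, hf, rfl⟩ := hc
  exact ⟨f, hf, hlt⟩

lemma osslnB_nonneg (hW : ∀ u v, 0 ≤ W u v) : (0 : EReal) ≤ osslnB n l r nl nr hb W :=
  le_osslnB fun f _ => EReal.coe_nonneg.mpr (cost_nonneg hW)

lemma osslnB_exists_real (hW : ∀ u v, 0 ≤ W u v) (hb1 : 1 ≤ hb) :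
    ∃ a : ℝ, osslnB n l r nl nr hb W = (a : EReal) := by
  have hne_top : osslnB n l r nl nr hb W ≠ ⊤ := by
    have hle := osslnB_le (n := n) (W := W) (nl := nl) (nr := nr) (l := l) (r := r) (hb := hb)
      (fun _ => 1) (fun j _ _ => ⟨le_rfl, hb1⟩)
    intro hcon
    rw [hcon] at hle
    exact (EReal.coe_lt_top _).not_ge hle
  have hne_bot : osslnB n l r nl nr hb W ≠ ⊥ :=
    ne_bot_of_le_ne_bot (by simp) (osslnB_nonneg hW)
  exact ⟨_, (EReal.coe_toReal hne_top hne_bot).symm⟩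

end OsslnAPI

/-- Dynamic-programming recurrence for the bounded-height OSSLN problem: either the maximum
height of `[l, r]` is below `hb` (first branch), or some pivot `x ∈ [l, r]` gets height exactly
`hb`, contributing `∑_{u<x} ∑_{v∈[x,nr]} W u v + ∑_{u∈[nl,x)} ∑_{v>nr} W u v`, and the two
subintervals are solved independently. -/
theorem osslnB_recurrence
    (n : ℕ) (W : ℕ → ℕ → ℝ) (hW : ∀ u v, 0 ≤ W u v) (hmax : ℕ)
    (nl l r nr hb : ℕ) (h1 : 1 ≤ nl) (hnl : nl ≤ l) (hlr : l ≤ r) (hrnr : r ≤ nr)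
    (hnrn : nr ≤ n) (hb1 : 1 ≤ hb) (hbmax : hb ≤ hmax) :
    osslnB n l r nl nr hb W =
      min (osslnB n l r l r (hb - 1) W)
        ((Finset.Icc l r).inf' (Finset.nonempty_Icc.mpr hlr) (fun x =>
          osslnB n l (x - 1) nl nr hb W + osslnB n (x + 1) r nl nr hb W +
            ((∑ u ∈ Finset.Icc 1 (x - 1), ∑ v ∈ Finset.Icc x nr, W u v) +
              ∑ u ∈ Finset.Icc nl (x - 1), ∑ v ∈ Finset.Icc (nr + 1) n, W u v : ℝ))) := by
  apply le_antisymm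
  · refine le_min ?_ ?_
    · apply le_osslnB
      intro f hfeas
      have heq : cost n W l r nl nr hb f = cost n W l r l r (hb - 1) f :=
        cost_lower h1 hnl hlr hrnr hb1 (fun j u v => (hfeas j u v).2)
      rw [← heq]
      exact osslnB_le f (fun j u v =>
        ⟨(hfeas j u v).1, by have := (hfeas j u v).2; omega⟩)
    · apply Finset.le_inf'
      intro x hx
      rw [Finset.mem_Icc] at hx
      obtain ⟨a, ha⟩ := osslnB_exists_real (n := n) (W := W) (nl := nl) (l := l)
        (r := x - 1) (nr := nr) (hb := hb) hW hb1
      obtain ⟨b, hbb⟩ := osslnB_exists_real (n := n) (W := W) (nl := nl) (l := x + 1)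
        (r := r) (nr := nr) (hb := hb) hW hb1
      rw [ha, hbb, ← EReal.coe_add, ← EReal.coe_add]
      apply ereal_le_of_forall_add
      intro ε hε
      have hlt1 : osslnB n l (x - 1) nl nr hb W < ((a + ε / 2 : ℝ) : EReal) := by
        rw [ha]
        exact EReal.coe_lt_coe_iff.mpr (by linarith)
      have hlt2 : osslnB n (x + 1) r nl nr hb W < ((b + ε / 2 : ℝ) : EReal) := by
        rw [hbb]
        exact EReal.coe_lt_coe_iff.mpr (by linarith)
      obtain ⟨f1, hf1, hc1⟩ := osslnB_lt_exists hlt1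
      obtain ⟨f2, hf2, hc2⟩ := osslnB_lt_exists hlt2
      rw [EReal.coe_lt_coe_iff] at hc1 hc2
      set f : ℕ → ℕ := fun j => if j < x then f1 j else if j = x then hb else f2 j with hfdef
      have hfx : f x = hb := by simp [hfdef]
      have hfeas : ∀ j, l ≤ j → j ≤ r → 1 ≤ f j ∧ f j ≤ hb := by
        intro j hj1 hj2
        by_cases hjx : j < x
        · have h := hf1 j hj1 (by omega)
          simpa [hfdef, hjx] using h
        · by_cases hjx2 : j = x
          · refine ⟨?_, ?_⟩ <;> simp [hfdef, hjx, hjx2] <;> omega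
          · have h := hf2 j (by omega) hj2
            simpa [hfdef, hjx, hjx2] using h
      have he1 : extHeight l (x - 1) nl nr hb f = extHeight l (x - 1) nl nr hb f1 :=
        ext_congr (fun j u v => by simp only [hfdef]; rw [if_pos (by omega)])
      have he2 : extHeight (x + 1) r nl nr hb f = extHeight (x + 1) r nl nr hb f2 :=
        ext_congr (fun j u v => by
          simp only [hfdef]
          rw [if_neg (by omega), if_neg (by omega)])
      have hcost : cost n W l r nl nr hb f
          = cost n W l (x - 1) nl nr hb f1 + cost n W (x + 1) r nl nr hb f2 +
            ((∑ u ∈ Finset.Icc 1 (x - 1), ∑ v ∈ Finset.Icc x nr, W u v) +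
              ∑ u ∈ Finset.Icc nl (x - 1), ∑ v ∈ Finset.Icc (nr + 1) n, W u v) := by
        rw [cost_split h1 hnl hrnr hnrn hx.1 hx.2 (fun j u v => (hfeas j u v).2) hfx]
        unfold cost
        rw [he1, he2]
      have hle : cost n W l r nl nr hb f
          ≤ a + b + ((∑ u ∈ Finset.Icc 1 (x - 1), ∑ v ∈ Finset.Icc x nr, W u v) +
              ∑ u ∈ Finset.Icc nl (x - 1), ∑ v ∈ Finset.Icc (nr + 1) n, W u v) + ε := by
        rw [hcost]
        linarith
      exact le_trans (osslnB_le f hfeas) (EReal.coe_le_coe_iff.mpr hle)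
  · apply le_osslnB
    intro f hfeas
    by_cases hex : ∃ x, l ≤ x ∧ x ≤ r ∧ f x = hb
    · obtain ⟨x, hx1, hx2, hfx⟩ := hex
      refine le_trans (min_le_right _ _)
        (le_trans (Finset.inf'_le _ (Finset.mem_Icc.mpr ⟨hx1, hx2⟩)) ?_)
      have hcL : osslnB n l (x - 1) nl nr hb W ≤ ((cost n W l (x - 1) nl nr hb f : ℝ) : EReal) :=
        osslnB_le f (fun j u v => hfeas j u (by omega))
      have hcR : osslnB n (x + 1) r nl nr hb W ≤ ((cost n W (x + 1) r nl nr hb f : ℝ) : EReal) :=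
        osslnB_le f (fun j u v => hfeas j (by omega) v)
      obtain ⟨aL, haL⟩ := osslnB_exists_real (n := n) (W := W) (nl := nl) (l := l)
        (r := x - 1) (nr := nr) (hb := hb) hW hb1
      obtain ⟨aR, haR⟩ := osslnB_exists_real (n := n) (W := W) (nl := nl) (l := x + 1)
        (r := r) (nr := nr) (hb := hb) hW hb1
      rw [haL] at hcL
      rw [haR] at hcR
      rw [EReal.coe_le_coe_iff] at hcL hcR
      rw [haL, haR, ← EReal.coe_add, ← EReal.coe_add, EReal.coe_le_coe_iff]
      rw [cost_split h1 hnl hrnr hnrn hx1 hx2 (fun j u v => (hfeas j u v).2) hfx]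
      linarith
    · push_neg at hex
      refine le_trans (min_le_left _ _) ?_
      have heq : cost n W l r nl nr hb f = cost n W l r l r (hb - 1) f :=
        cost_lower h1 hnl hlr hrnr hb1 (fun j u v => by
          have h := hfeas j u v
          have h2 := hex j u v
          omega)
      rw [heq]
      exact osslnB_le f (fun j u v => ⟨(hfeas j u v).1, by
        have h := (hfeas j u v).2
        have h2 := hex j u v
        omega⟩)


end OSSLN
end

section
/- Let h be an optimal height assignment for the unbounded Optimum Static Skip List Network problem OSSLNU(V,W) on V = {1,…,n} (heights in {1,…,n}). Then there exists a height assignment h' with Cost(h',W) ≤ Cost(h,W) such that for every interval [l,r] ⊆ [1,n] there is exactly one vertex x ∈ [l,r] with h'(x) = max_{w∈[l,r]} h'(w). -/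
open scoped Classical ENNReal NNReal
open MeasureTheory ProbabilityTheory

namespace P2P

variable {n : ℕ}

variable {α : Type*} [LinearOrder α] {h : Fin n → α} {v x p : Fin n}

lemma nextHop_eq_left (hxv : x < v) (hedge : IsEdge h x p) (hxp : x < p) (hpv : p ≤ v)
    (hmax : ∀ y, IsEdge h x y → x < y → y ≤ v → y ≤ p) : nextHop h v x = p := by
  unfold nextHop
  rw [if_pos hxv]
  have hmem : p ∈ Finset.univ.filter fun y => IsEdge h x y ∧ x < y ∧ y ≤ v := by
    simp [hedge, hxp, hpv]
  have : (Finset.univ.filter fun y => IsEdge h x y ∧ x < y ∧ y ≤ v).max = (p : WithBot (Fin n)) := by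
    apply le_antisymm
    · apply Finset.max_le
      intro y hy
      simp only [Finset.mem_filter] at hy
      exact_mod_cast hmax y hy.2.1 hy.2.2.1 hy.2.2.2
    · exact Finset.le_max hmem
  rw [this]; rfl

lemma nextHop_eq_right (hvx : v < x) (hedge : IsEdge h x p) (hvp : v ≤ p) (hpx : p < x)
    (hmin : ∀ y, IsEdge h x y → v ≤ y → y < x → p ≤ y) : nextHop h v x = p := by
  unfold nextHop
  rw [if_neg (asymm hvx), if_pos hvx]
  have hmem : p ∈ Finset.univ.filter fun y => IsEdge h x y ∧ v ≤ y ∧ y < x := by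
    simp [hedge, hvp, hpx]
  have : (Finset.univ.filter fun y => IsEdge h x y ∧ v ≤ y ∧ y < x).min = (p : WithTop (Fin n)) := by
    apply le_antisymm
    · exact Finset.min_le hmem
    · apply Finset.le_min
      intro y hy
      simp only [Finset.mem_filter] at hy
      exact_mod_cast hmin y hy.2.1 hy.2.2.1 hy.2.2.2
  rw [this]; rfl


/-- semantic characterization, left (x < v) -/
lemma nextHop_char_left (hxv : x < v) (hxp : x < p) (hpv : p ≤ v)
    (hbet : ∀ z : Fin n, x < z → z < p → h z < min (h x) (h p))
    (hblock : ∀ y : Fin n, p < y → y ≤ v → ¬ h p < min (h x) (h y)) :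
    nextHop h v x = p := by
  have hedge : IsEdge h x p := by
    refine ⟨ne_of_lt hxp, fun z hz1 hz2 => ?_⟩
    rw [min_eq_left hxp.le] at hz1
    rw [max_eq_right hxp.le] at hz2
    exact hbet z hz1 hz2
  refine nextHop_eq_left hxv hedge hxp hpv ?_
  intro y hy hxy hyv
  by_contra hyp
  push_neg at hyp
  have := hy.2 p (by rwa [min_eq_left hxy.le]) (by rwa [max_eq_right hxy.le])
  exact hblock y hyp hyv this

/-- semantic characterization, right (v < x) -/
lemma nextHop_char_right (hvx : v < x) (hvp : v ≤ p) (hpx : p < x)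
    (hbet : ∀ z : Fin n, p < z → z < x → h z < min (h x) (h p))
    (hblock : ∀ y : Fin n, v ≤ y → y < p → ¬ h p < min (h x) (h y)) :
    nextHop h v x = p := by
  have hedge : IsEdge h x p := by
    refine ⟨(ne_of_lt hpx).symm, fun z hz1 hz2 => ?_⟩
    rw [min_eq_right hpx.le] at hz1
    rw [max_eq_left hpx.le] at hz2
    exact hbet z hz1 hz2
  refine nextHop_eq_right hvx hedge hvp hpx ?_
  intro y hy hvy hyx
  by_contra hyp
  push_neg at hyp
  have := hy.2 p (by rwa [min_eq_right hyx.le]) (by rwa [max_eq_left hyx.le])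
  exact hblock y hvy hyp this

lemma nextHop_progress_left (hxv : x < v) :
    x < nextHop h v x ∧ nextHop h v x ≤ v := by
  have hn : (x : ℕ) + 1 < n := lt_of_le_of_lt (Nat.succ_le_of_lt hxv) v.isLt
  set y₀ : Fin n := ⟨(x : ℕ) + 1, hn⟩ with hy₀
  have hxy₀ : x < y₀ := by simp [hy₀, Fin.lt_def]
  have hy₀v : y₀ ≤ v := by
    simp only [Fin.le_def, hy₀]
    exact Nat.succ_le_of_lt hxv
  have hedge : IsEdge h x y₀ := by
    refine ⟨ne_of_lt hxy₀, fun z hz1 hz2 => ?_⟩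
    rw [min_eq_left hxy₀.le] at hz1
    rw [max_eq_right hxy₀.le] at hz2
    exfalso
    rw [Fin.lt_def] at hz1 hz2
    simp only [hy₀] at hz2
    omega
  have hne : (Finset.univ.filter fun y => IsEdge h x y ∧ x < y ∧ y ≤ v).Nonempty :=
    ⟨y₀, by simp [hedge, hxy₀, hy₀v]⟩
  obtain ⟨a, ha⟩ := Finset.max_of_nonempty hne
  have hmem := Finset.mem_of_max ha
  simp only [Finset.mem_filter] at hmem
  unfold nextHop
  rw [if_pos hxv, ha]
  exact ⟨hmem.2.2.1, hmem.2.2.2⟩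

lemma nextHop_progress_right (hvx : v < x) :
    v ≤ nextHop h v x ∧ nextHop h v x < x := by
  have hn : (x : ℕ) ≠ 0 := by
    have := hvx
    rw [Fin.lt_def] at this
    omega
  set y₀ : Fin n := ⟨(x : ℕ) - 1, lt_trans (by omega) x.isLt⟩ with hy₀
  have hy₀x : y₀ < x := by simp only [Fin.lt_def, hy₀]; omega
  have hvy₀ : v ≤ y₀ := by
    rw [Fin.lt_def] at hvx
    simp only [Fin.le_def, hy₀]
    omega
  have hedge : IsEdge h x y₀ := by
    refine ⟨(ne_of_lt hy₀x).symm, fun z hz1 hz2 => ?_⟩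
    rw [min_eq_right hy₀x.le] at hz1
    rw [max_eq_left hy₀x.le] at hz2
    exfalso
    rw [Fin.lt_def] at hz1 hz2
    simp only [hy₀] at hz1
    omega
  have hne : (Finset.univ.filter fun y => IsEdge h x y ∧ v ≤ y ∧ y < x).Nonempty :=
    ⟨y₀, by simp [hedge, hvy₀, hy₀x]⟩
  obtain ⟨a, ha⟩ := Finset.min_of_nonempty hne
  have hmem := Finset.mem_of_min ha
  simp only [Finset.mem_filter] at hmem
  unfold nextHop
  rw [if_neg (asymm hvx), if_pos hvx, ha]
  exact ⟨hmem.2.2.1, hmem.2.2.2⟩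


/-- distance-to-destination measure -/
def gap (v x : Fin n) : ℕ := ((v : ℕ) - (x : ℕ)) + ((x : ℕ) - (v : ℕ))

lemma gap_nextHop (hxv : x ≠ v) : gap v (nextHop h v x) < gap v x := by
  rcases lt_or_gt_of_ne hxv with hlt | hgt
  · obtain ⟨h1, h2⟩ := nextHop_progress_left (h := h) hlt
    have e1 : (x:ℕ) < (nextHop h v x : ℕ) := h1
    have e2 : (nextHop h v x : ℕ) ≤ (v:ℕ) := h2
    have e3 : (x:ℕ) < (v:ℕ) := hlt
    unfold gap; omega
  · obtain ⟨h1, h2⟩ := nextHop_progress_right (h := h) hgt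
    have e1 : (v:ℕ) ≤ (nextHop h v x : ℕ) := h1
    have e2 : (nextHop h v x : ℕ) < (x:ℕ) := h2
    have e3 : (v:ℕ) < (x:ℕ) := hgt
    unfold gap; omega

lemma routeAux_self (k : ℕ) : routeAux h v k v = [v] := by
  cases k <;> simp [routeAux]

lemma routeAux_stable : ∀ k : ℕ, ∀ x : Fin n, gap v x ≤ k →
    routeAux h v (k + 1) x = routeAux h v k x := by
  intro k
  induction k with
  | zero =>
    intro x hx
    have : x = v := by
      have := Fin.val_eq_val x v
      unfold gap at hx; rw [Fin.ext_iff]; omega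
    subst this
    simp [routeAux]
  | succ j ih =>
    intro x hx
    by_cases hxv : x = v
    · subst hxv; simp [routeAux_self]
    · rw [show j + 1 + 1 = (j + 1) + 1 from rfl]
      unfold routeAux
      rw [if_neg hxv, if_neg hxv]
      congr 1
      apply ih
      have := gap_nextHop (h := h) (v := v) (x := x) hxv
      omega

lemma routeAux_of_le {k k' : ℕ} (hk : gap v x ≤ k) (hkk : k ≤ k') :
    routeAux h v k' x = routeAux h v k x := by
  induction k' with
  | zero => have : k = 0 := by omega
            subst this; rfl
  | succ j ih =>
    rcases Nat.lt_or_ge k (j+1) with hlt | hge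
    · have hj : k ≤ j := by omega
      rw [routeAux_stable j x (le_trans hk hj), ih hj]
    · have : k = j + 1 := by omega
      subst this; rfl

lemma gap_le (x : Fin n) : gap v x ≤ n - 1 := by
  have h1 := v.isLt; have h2 := x.isLt
  unfold gap; omega

lemma routeAux_ne_nil (k : ℕ) (x : Fin n) : routeAux h v k x ≠ [] := by
  cases k with
  | zero => simp [routeAux]
  | succ j =>
    unfold routeAux
    split <;> simp

lemma dist_self : dist h v v = 0 := by
  unfold dist route
  rw [routeAux_self]
  rfl

lemma dist_succ (hxv : x ≠ v) : dist h x v = dist h (nextHop h v x) v + 1 := by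
  have hn : n ≠ 0 := by rintro rfl; exact x.elim0
  obtain ⟨m, rfl⟩ : ∃ m, n = m + 1 := ⟨n - 1, by omega⟩
  unfold dist route
  have step : routeAux h v (m + 1) x = x :: routeAux h v m (nextHop h v x) := by
    rw [routeAux, if_neg hxv]
  have hg : gap v (nextHop h v x) ≤ m := by
    have h1 := gap_nextHop (h := h) (v := v) (x := x) hxv
    have h2 := gap_le (v := v) x
    omega
  have eq2 : routeAux h v m (nextHop h v x) = routeAux h v (m+1) (nextHop h v x) :=
    (routeAux_stable m _ hg).symm
  rw [step, eq2, List.length_cons]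
  have hne := routeAux_ne_nil (h := h) (v := v) (m+1) (nextHop h v x)
  have : (routeAux h v (m+1) (nextHop h v x)).length ≥ 1 :=
    List.length_pos_iff.mpr hne
  omega


section TB
variable (h : Fin n → ℕ)

/-- Tie-broken heights: scale by `n+1` and break ties leftward-increasing. -/
noncomputable def tb : Fin n → ℕ := fun i => (n+1) * h i + (n - (i : ℕ))

variable {h}

lemma tb_mono {i j : Fin n} (hij : h i < h j) : tb h i < tb h j := by
  have h1 : (n+1) * (h i + 1) ≤ (n+1) * h j := Nat.mul_le_mul_left _ hij
  have h2 : (n+1) * (h i + 1) = (n+1) * h i + (n+1) := by ring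
  have h3 : n - (i : ℕ) ≤ n := Nat.sub_le _ _
  unfold tb; omega

lemma tb_tie {i j : Fin n} (hij : h i = h j) (hlt : i < j) : tb h j < tb h i := by
  have h1 : (i : ℕ) < (j : ℕ) := hlt
  have h2 : (j : ℕ) < n := j.isLt
  unfold tb; rw [hij]; omega

lemma tb_inj : Function.Injective (tb h) := by
  intro i j hij
  rcases lt_trichotomy (h i) (h j) with hh | hh | hh
  · exact absurd hij (ne_of_lt (tb_mono hh))
  · rcases lt_trichotomy i j with hij2 | hij2 | hij2
    · exact absurd hij.symm (ne_of_lt (tb_tie hh hij2))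
    · exact hij2
    · exact absurd hij (ne_of_lt (tb_tie hh.symm hij2))
  · exact absurd hij.symm (ne_of_lt (tb_mono hh))

/-- Ascending tie-chain lemma (left side). -/
lemma chainA {v : Fin n} (m : ℕ) : ∀ N : ℕ, ∀ c p' : Fin n, (p' : ℕ) - (c : ℕ) ≤ N →
    c < p' → p' ≤ v → h c = m → m < h p' →
    (∀ z : Fin n, c < z → z < p' → h z ≤ m) →
    dist h p' v + 1 ≤ dist h c v := by
  intro N
  induction N with
  | zero =>
    intro c p' hN hcp _ _ _ _
    have : (c : ℕ) < (p' : ℕ) := hcp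
    omega
  | succ N ih =>
    intro c p' hN hcp hpv hcm hpm hbet
    have hcv : c < v := lt_of_lt_of_le hcp hpv
    have hcne : c ≠ v := ne_of_lt hcv
    by_cases hT : ∃ z ∈ Finset.Ioo c p', m ≤ h z
    · -- there is a tie strictly between; hop to the first one
      set T := (Finset.Ioo c p').filter (fun z => m ≤ h z) with hTdef
      have hTne : T.Nonempty := by
        obtain ⟨z, hz1, hz2⟩ := hT
        exact ⟨z, by simp [hTdef, Finset.mem_Ioo] at *; exact ⟨hz1, hz2⟩⟩
      set t := T.min' hTne with htdef
      have htT : t ∈ T := Finset.min'_mem _ _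
      simp only [hTdef, Finset.mem_filter, Finset.mem_Ioo] at htT
      obtain ⟨⟨hct, htp⟩, htm⟩ := htT
      have htm' : h t = m := le_antisymm (hbet t hct htp) htm
      have hmin : ∀ z : Fin n, c < z → z < t → h z < m := by
        intro z hz1 hz2
        have hzp : z < p' := lt_trans hz2 htp
        have hle : h z ≤ m := hbet z hz1 hzp
        rcases lt_or_eq_of_le hle with hlt | heq
        · exact hlt
        · exfalso
          have : z ∈ T := by
            simp only [hTdef, Finset.mem_filter, Finset.mem_Ioo]
            exact ⟨⟨hz1, hzp⟩, le_of_eq heq.symm⟩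
          have := Finset.min'_le _ _ this
          rw [← htdef] at this
          exact absurd hz2 (not_lt.mpr this)
      have hhop : nextHop h v c = t := by
        apply nextHop_char_left hcv hct (le_of_lt (lt_of_lt_of_le htp hpv))
        · intro z hz1 hz2
          have := hmin z hz1 hz2
          rw [hcm, htm']; simpa [min_self] using this
        · intro y _ _
          rw [htm', hcm]
          exact not_lt.mpr (le_trans (min_le_left _ _) (le_refl m))
      have hstep := dist_succ (h := h) hcne
      rw [hhop] at hstep
      have hIH : dist h p' v + 1 ≤ dist h t v := by
        apply ih t p'
        · have e1 : (c : ℕ) < (t : ℕ) := hct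
          have e2 : (t : ℕ) < (p' : ℕ) := htp
          omega
        · exact htp
        · exact hpv
        · exact htm'
        · exact hpm
        · intro z hz1 hz2
          exact hbet z (lt_trans hct hz1) hz2
      omega
    · -- no tie in between: hop straight to p'
      push_neg at hT
      have hlt : ∀ z : Fin n, c < z → z < p' → h z < m := by
        intro z hz1 hz2
        have := hT z (Finset.mem_Ioo.mpr ⟨hz1, hz2⟩)
        omega
      have hhop : nextHop h v c = p' := by
        apply nextHop_char_left hcv hcp hpv
        · intro z hz1 hz2
          have := hlt z hz1 hz2
          rw [hcm]
          have : h z < m := this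
          have hmin : min m (h p') = m := min_eq_left (le_of_lt hpm)
          omega
        · intro y _ _
          rw [hcm]
          intro hcon
          have : min m (h y) ≤ m := min_le_left _ _
          omega
      have hstep := dist_succ (h := h) hcne
      rw [hhop] at hstep
      omega

/-- Descending tie-chain lemma (right side). -/
lemma chainB {v : Fin n} : ∀ N : ℕ, ∀ c q1 : Fin n, (c : ℕ) - (q1 : ℕ) ≤ N →
    v ≤ q1 → q1 ≤ c → h q1 = h c →
    (∀ z : Fin n, q1 < z → z < c → h z ≤ h c) →
    dist h q1 v ≤ dist h c v := by
  intro N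
  induction N with
  | zero =>
    intro c q1 hN hvq hqc _ _
    have e1 : (q1 : ℕ) ≤ (c : ℕ) := hqc
    have : q1 = c := by
      rw [Fin.ext_iff]; omega
    rw [this]
  | succ N ih =>
    intro c q1 hN hvq hqc hqm hbet
    rcases eq_or_lt_of_le hqc with heq | hlt
    · rw [heq]
    · have hvc : v < c := lt_of_le_of_lt hvq hlt
      have hcne : c ≠ v := (ne_of_lt hvc).symm
      set T := (Finset.Ico v c).filter (fun z => h c ≤ h z) with hTdef
      have hq1T : q1 ∈ T := by
        simp only [hTdef, Finset.mem_filter, Finset.mem_Ico]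
        exact ⟨⟨hvq, hlt⟩, le_of_eq hqm.symm⟩
      set t := T.max' ⟨q1, hq1T⟩ with htdef
      have htT : t ∈ T := Finset.max'_mem _ _
      simp only [hTdef, Finset.mem_filter, Finset.mem_Ico] at htT
      obtain ⟨⟨hvt, htc⟩, htm⟩ := htT
      have hq1t : q1 ≤ t := Finset.le_max' _ _ hq1T
      have htval : h t = h c := by
        rcases eq_or_lt_of_le hq1t with heq2 | hlt2
        · rw [← heq2, hqm]
        · exact le_antisymm (hbet t hlt2 htc) htm
      have hafter : ∀ z : Fin n, t < z → z < c → h z < h c := by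
        intro z hz1 hz2
        by_contra hcon
        push_neg at hcon
        have : z ∈ T := by
          simp only [hTdef, Finset.mem_filter, Finset.mem_Ico]
          exact ⟨⟨le_trans hvq (le_trans hq1t (le_of_lt hz1)), hz2⟩, hcon⟩
        have := Finset.le_max' _ _ this
        rw [← htdef] at this
        exact absurd hz1 (not_lt.mpr this)
      have hhop : nextHop h v c = t := by
        apply nextHop_char_right hvc hvt htc
        · intro z hz1 hz2
          have := hafter z hz1 hz2
          rw [htval]
          omega
        · intro y _ _
          rw [htval]
          intro hcon
          have : min (h c) (h y) ≤ h c := min_le_left _ _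
          omega
      have hstep := dist_succ (h := h) hcne
      rw [hhop] at hstep
      have hIH : dist h q1 v ≤ dist h t v := by
        apply ih t q1
        · have e1 : (q1 : ℕ) ≤ (t : ℕ) := hq1t
          have e2 : (t : ℕ) < (c : ℕ) := htc
          omega
        · exact hvq
        · exact hq1t
        · rw [hqm, htval]
        · intro z hz1 hz2
          rw [htval]
          exact hbet z hz1 (lt_trans hz2 htc)
      omega

/-- Key step: the tie-broken next hop is at least as good (w.r.t. original distances). -/
lemma tb_key {v x : Fin n} (hxv : x ≠ v) :
    dist h (nextHop (tb h) v x) v + 1 ≤ dist h x v := by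
  rcases lt_or_gt_of_ne hxv with hlt | hgt
  · -- x < v
    by_cases hA : ∃ z ∈ Finset.Ioc x v, h x < h z
    · -- ascent case: jump to the first strictly higher node
      set T := (Finset.Ioc x v).filter (fun z => h x < h z) with hTdef
      have hTne : T.Nonempty := by
        obtain ⟨z, hz1, hz2⟩ := hA
        exact ⟨z, by simp only [hTdef, Finset.mem_filter]; exact ⟨hz1, hz2⟩⟩
      set p' := T.min' hTne with hpdef
      have hpT : p' ∈ T := Finset.min'_mem _ _
      simp only [hTdef, Finset.mem_filter, Finset.mem_Ioc] at hpT
      obtain ⟨⟨hxp, hpv⟩, hph⟩ := hpT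
      have hbefore : ∀ z : Fin n, x < z → z < p' → h z ≤ h x := by
        intro z hz1 hz2
        by_contra hcon
        push_neg at hcon
        have : z ∈ T := by
          simp only [hTdef, Finset.mem_filter, Finset.mem_Ioc]
          exact ⟨⟨hz1, le_trans (le_of_lt hz2) hpv⟩, hcon⟩
        have := Finset.min'_le _ _ this
        rw [← hpdef] at this
        exact absurd hz2 (not_lt.mpr this)
      have hhop' : nextHop (tb h) v x = p' := by
        apply nextHop_char_left hlt hxp hpv
        · intro z hz1 hz2
          have hzx := hbefore z hz1 hz2
          have e1 : tb h z < tb h x := by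
            rcases lt_or_eq_of_le hzx with l | e
            · exact tb_mono l
            · exact tb_tie e.symm hz1
          have e2 : tb h z < tb h p' := tb_mono (lt_of_le_of_lt hzx hph)
          exact lt_min e1 e2
        · intro y _ _
          exact not_lt.mpr (le_of_lt (lt_of_le_of_lt (min_le_left _ _) (tb_mono hph)))
      rw [hhop']
      apply chainA (h x) ((p' : ℕ)) x p'
      · omega
      · exact hxp
      · exact hpv
      · rfl
      · exact hph
      · exact hbefore
    · -- no higher node: both hop to the leftmost maximum
      push_neg at hA
      have hSne : (Finset.Ioc x v).Nonempty := ⟨v, Finset.mem_Ioc.mpr ⟨hlt, le_refl v⟩⟩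
      set A2 := (Finset.Ioc x v).filter (fun z => ∀ y ∈ Finset.Ioc x v, h y ≤ h z) with hAdef
      have hAne : A2.Nonempty := by
        obtain ⟨b, hb1, hb2⟩ := (Finset.Ioc x v).exists_max_image h hSne
        exact ⟨b, by simp only [hAdef, Finset.mem_filter]; exact ⟨hb1, hb2⟩⟩
      set q := A2.min' hAne with hqdef
      have hqA : q ∈ A2 := Finset.min'_mem _ _
      simp only [hAdef, Finset.mem_filter] at hqA
      obtain ⟨hqS, hqmax⟩ := hqA
      obtain ⟨hxq, hqv⟩ := Finset.mem_Ioc.mp hqS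
      have hqx : h q ≤ h x := hA q (Finset.mem_Ioc.mpr ⟨hxq, hqv⟩)
      have hbefore : ∀ z : Fin n, x < z → z < q → h z < h q := by
        intro z hz1 hz2
        have hzS : z ∈ Finset.Ioc x v := Finset.mem_Ioc.mpr ⟨hz1, le_trans (le_of_lt hz2) hqv⟩
        rcases lt_or_eq_of_le (hqmax z hzS) with l | e
        · exact l
        · exfalso
          have : z ∈ A2 := by
            simp only [hAdef, Finset.mem_filter]
            exact ⟨hzS, fun y hy => le_trans (hqmax y hy) (le_of_eq e.symm)⟩
          have := Finset.min'_le _ _ this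
          rw [← hqdef] at this
          exact absurd hz2 (not_lt.mpr this)
      have hhop : nextHop h v x = q := by
        apply nextHop_char_left hlt hxq hqv
        · intro z hz1 hz2
          rw [min_eq_right hqx]
          exact hbefore z hz1 hz2
        · intro y hy1 hy2
          have : h y ≤ h q := hqmax y (Finset.mem_Ioc.mpr ⟨lt_trans hxq hy1, hy2⟩)
          exact not_lt.mpr (le_trans (min_le_right _ _) this)
      have hhop' : nextHop (tb h) v x = q := by
        apply nextHop_char_left hlt hxq hqv
        · intro z hz1 hz2
          have hzq := hbefore z hz1 hz2
          have e1 : tb h z < tb h x := tb_mono (lt_of_lt_of_le hzq hqx)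
          have e2 : tb h z < tb h q := tb_mono hzq
          exact lt_min e1 e2
        · intro y hy1 hy2
          have hyq : h y ≤ h q := hqmax y (Finset.mem_Ioc.mpr ⟨lt_trans hxq hy1, hy2⟩)
          have : tb h y < tb h q := by
            rcases lt_or_eq_of_le hyq with l | e
            · exact tb_mono l
            · exact tb_tie e.symm hy1
          exact not_lt.mpr (le_of_lt (lt_of_le_of_lt (min_le_right _ _) this))
      have hstep := dist_succ (h := h) hxv
      rw [hhop] at hstep
      rw [hhop']
      omega
  · -- v < x
    by_cases hA : ∃ z ∈ Finset.Ico v x, h x ≤ h z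
    · -- a node at least as high exists to the left: both hop to the nearest one
      set T := (Finset.Ico v x).filter (fun z => h x ≤ h z) with hTdef
      have hTne : T.Nonempty := by
        obtain ⟨z, hz1, hz2⟩ := hA
        exact ⟨z, by simp only [hTdef, Finset.mem_filter]; exact ⟨hz1, hz2⟩⟩
      set p := T.max' hTne with hpdef
      have hpT : p ∈ T := Finset.max'_mem _ _
      simp only [hTdef, Finset.mem_filter, Finset.mem_Ico] at hpT
      obtain ⟨⟨hvp, hpx⟩, hph⟩ := hpT
      have hafter : ∀ z : Fin n, p < z → z < x → h z < h x := by
        intro z hz1 hz2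
        by_contra hcon
        push_neg at hcon
        have : z ∈ T := by
          simp only [hTdef, Finset.mem_filter, Finset.mem_Ico]
          exact ⟨⟨le_trans hvp (le_of_lt hz1), hz2⟩, hcon⟩
        have := Finset.le_max' _ _ this
        rw [← hpdef] at this
        exact absurd hz1 (not_lt.mpr this)
      have htbxp : tb h x < tb h p := by
        rcases lt_or_eq_of_le hph with l | e
        · exact tb_mono l
        · exact tb_tie e.symm hpx
      have hhop : nextHop h v x = p := by
        apply nextHop_char_right hgt hvp hpx
        · intro z hz1 hz2
          rw [min_eq_left hph]
          exact hafter z hz1 hz2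
        · intro y _ _
          exact not_lt.mpr (le_trans (min_le_left _ _) hph)
      have hhop' : nextHop (tb h) v x = p := by
        apply nextHop_char_right hgt hvp hpx
        · intro z hz1 hz2
          have hzx := hafter z hz1 hz2
          have e1 : tb h z < tb h x := tb_mono hzx
          exact lt_min e1 (lt_trans e1 htbxp)
        · intro y _ _
          exact not_lt.mpr (le_of_lt (lt_of_le_of_lt (min_le_left _ _) htbxp))
      have hstep := dist_succ (h := h) hxv
      rw [hhop] at hstep
      rw [hhop']
      omega
    · -- descent case: old hops to rightmost maximum, new hops to leftmost maximum
      push_neg at hA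
      have hB : ∀ z ∈ Finset.Ico v x, h z < h x := hA
      have hSne : (Finset.Ico v x).Nonempty := ⟨v, Finset.mem_Ico.mpr ⟨le_refl v, hgt⟩⟩
      set A2 := (Finset.Ico v x).filter (fun z => ∀ y ∈ Finset.Ico v x, h y ≤ h z) with hAdef
      have hAne : A2.Nonempty := by
        obtain ⟨b, hb1, hb2⟩ := (Finset.Ico v x).exists_max_image h hSne
        exact ⟨b, by simp only [hAdef, Finset.mem_filter]; exact ⟨hb1, hb2⟩⟩
      set q1 := A2.min' hAne with hq1def
      set ql := A2.max' hAne with hqldef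
      have hq1A : q1 ∈ A2 := Finset.min'_mem _ _
      have hqlA : ql ∈ A2 := Finset.max'_mem _ _
      have hq1ql : q1 ≤ ql := Finset.min'_le _ _ hqlA
      simp only [hAdef, Finset.mem_filter] at hq1A hqlA
      obtain ⟨hq1S, hq1max⟩ := hq1A
      obtain ⟨hqlS, hqlmax⟩ := hqlA
      obtain ⟨hvq1, hq1x⟩ := Finset.mem_Ico.mp hq1S
      obtain ⟨hvql, hqlx⟩ := Finset.mem_Ico.mp hqlS
      have hq1ql_h : h q1 = h ql :=
        le_antisymm (hqlmax q1 (Finset.mem_Ico.mpr ⟨hvq1, hq1x⟩))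
          (hq1max ql (Finset.mem_Ico.mpr ⟨hvql, hqlx⟩))
      have hafter : ∀ z : Fin n, ql < z → z < x → h z < h ql := by
        intro z hz1 hz2
        have hzS : z ∈ Finset.Ico v x := Finset.mem_Ico.mpr ⟨le_trans hvql (le_of_lt hz1), hz2⟩
        rcases lt_or_eq_of_le (hqlmax z hzS) with l | e
        · exact l
        · exfalso
          have : z ∈ A2 := by
            simp only [hAdef, Finset.mem_filter]
            exact ⟨hzS, fun y hy => le_trans (hqlmax y hy) (le_of_eq e.symm)⟩
          have := Finset.le_max' _ _ this
          rw [← hqldef] at this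
          exact absurd hz1 (not_lt.mpr this)
      have hqlh : h ql < h x := hB ql (Finset.mem_Ico.mpr ⟨hvql, hqlx⟩)
      have hhop : nextHop h v x = ql := by
        apply nextHop_char_right hgt hvql hqlx
        · intro z hz1 hz2
          rw [min_eq_right (le_of_lt hqlh)]
          exact hafter z hz1 hz2
        · intro y hy1 hy2
          have : h y ≤ h ql := hqlmax y (Finset.mem_Ico.mpr ⟨hy1, lt_trans hy2 hqlx⟩)
          exact not_lt.mpr (le_trans (min_le_right _ _) this)
      have hhop' : nextHop (tb h) v x = q1 := by
        apply nextHop_char_right hgt hvq1 hq1x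
        · intro z hz1 hz2
          have hzS : z ∈ Finset.Ico v x := Finset.mem_Ico.mpr ⟨le_trans hvq1 (le_of_lt hz1), hz2⟩
          have hzq1 : h z ≤ h q1 := hq1max z hzS
          have e2 : tb h z < tb h q1 := by
            rcases lt_or_eq_of_le hzq1 with l | e
            · exact tb_mono l
            · exact tb_tie e.symm hz1
          have e1 : tb h z < tb h x :=
            tb_mono (lt_of_le_of_lt hzq1 (by rw [hq1ql_h]; exact hqlh))
          exact lt_min e1 e2
        · intro y hy1 hy2
          have hyS : y ∈ Finset.Ico v x := Finset.mem_Ico.mpr ⟨hy1, lt_trans hy2 hq1x⟩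
          have hyq1 : h y ≤ h q1 := hq1max y hyS
          rcases lt_or_eq_of_le hyq1 with l | e
          · exact not_lt.mpr (le_of_lt (lt_of_le_of_lt (min_le_right _ _) (tb_mono l)))
          · exfalso
            have : y ∈ A2 := by
              simp only [hAdef, Finset.mem_filter]
              exact ⟨hyS, fun y' hy' => le_trans (hq1max y' hy') (le_of_eq e.symm)⟩
            have := Finset.min'_le _ _ this
            rw [← hq1def] at this
            exact absurd hy2 (not_lt.mpr this)
      have hchain : dist h q1 v ≤ dist h ql v := by
        apply chainB ((ql : ℕ)) ql q1
        · omega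
        · exact hvq1
        · exact hq1ql
        · exact hq1ql_h
        · intro z hz1 hz2
          exact hqlmax z (Finset.mem_Ico.mpr ⟨le_trans hvq1 (le_of_lt hz1), lt_trans hz2 hqlx⟩)
      have hstep := dist_succ (h := h) hxv
      rw [hhop] at hstep
      rw [hhop']
      omega

/-- Greedy distances do not increase under tie-breaking. -/
lemma tb_dist_le (x v : Fin n) : dist (tb h) x v ≤ dist h x v := by
  suffices H : ∀ d : ℕ, ∀ x : Fin n, dist h x v ≤ d → dist (tb h) x v ≤ dist h x v from
    H (dist h x v) x le_rfl
  intro d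
  induction d with
  | zero =>
    intro x hx
    by_cases hxv : x = v
    · subst hxv; rw [dist_self (h := tb h)]; omega
    · have := dist_succ (h := h) (v := v) hxv
      omega
  | succ d ih =>
    intro x hx
    by_cases hxv : x = v
    · subst hxv; rw [dist_self (h := tb h)]; omega
    · have hk := tb_key (h := h) (v := v) (x := x) hxv
      have h1 : dist h (nextHop (tb h) v x) v ≤ d := by omega
      have h2 := ih _ h1
      have h3 := dist_succ (h := tb h) (v := v) hxv
      omega
end TB

/-- Unique-pivot lemma: if `h` is an optimal height assignment for the unbounded Optimum Static
Skip List Network problem `OSSLNU(V, W)` (heights in `{1, …, n}`), then there exists a height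
assignment `h'` of cost at most that of `h` in which every interval `[l, r]` contains exactly
one vertex of maximum height. -/
theorem osslnu_unique_pivot
    (n : ℕ) (W : Fin n → Fin n → ℝ) (hW : ∀ u v, 0 ≤ W u v)
    (h : Fin n → ℕ) (hrange : ∀ i, 1 ≤ h i ∧ h i ≤ n)
    (hopt : ∀ g : Fin n → ℕ, (∀ i, 1 ≤ g i ∧ g i ≤ n) → cost h W ≤ cost g W) :
    ∃ h' : Fin n → ℕ, (∀ i, 1 ≤ h' i) ∧ cost h' W ≤ cost h W ∧
      ∀ l r : Fin n, ∀ hlr : l ≤ r,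
        ∃! x : Fin n, x ∈ Finset.Icc l r ∧
          h' x = (Finset.Icc l r).sup' (Finset.nonempty_Icc.mpr hlr) h' := by
  classical
  refine ⟨tb h, ?_, ?_, ?_⟩
  · intro i
    have h1 : 1 ≤ h i := (hrange i).1
    have h2 : (n+1) * 1 ≤ (n+1) * h i := Nat.mul_le_mul_left _ h1
    unfold tb
    omega
  · unfold cost
    apply Finset.sum_le_sum
    intro u _
    apply Finset.sum_le_sum
    intro v _
    apply mul_le_mul_of_nonneg_left _ (hW u v)
    exact_mod_cast tb_dist_le (h := h) u v
  · intro l r hlr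
    obtain ⟨x, hx, hsup⟩ :=
      Finset.exists_mem_eq_sup' (Finset.nonempty_Icc.mpr hlr) (tb h)
    refine ⟨x, ⟨hx, hsup.symm⟩, ?_⟩
    rintro y ⟨hy, hsy⟩
    exact tb_inj (hsy.trans hsup)

end P2P
end

section
/- In the Uniform model on n nodes, the expected degree of any node in the continuous skip list network is at most 4. -/
open scoped Classical ENNReal NNReal
open MeasureTheory ProbabilityTheory

namespace P2P

variable {n : ℕ}

noncomputable def nu : Measure ℝ := volume.restrict (Set.Ioo (0:ℝ) 1)

instance : IsProbabilityMeasure nu := ⟨by simp [nu, Real.volume_Ioo]⟩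

lemma nu_Iio (a : ℝ) : nu (Set.Iio a) = ENNReal.ofReal (min 1 a) := by
  rw [nu, Measure.restrict_apply measurableSet_Iio, Set.inter_comm, Set.Ioo_inter_Iio,
    Real.volume_Ioo, sub_zero]

lemma lint_pow (c : ℝ) (hc : 0 ≤ c) (j : ℕ) :
    ∫⁻ x in Set.Ioo (0:ℝ) c, ENNReal.ofReal (x ^ j) =
      ENNReal.ofReal (c ^ (j+1) / (j+1)) := by
  rw [← ofReal_integral_eq_lintegral_ofReal]
  · rw [← integral_Ioc_eq_integral_Ioo, ← intervalIntegral.integral_of_le hc, integral_pow]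
    norm_num
  · exact (continuous_pow j).integrableOn_Icc.mono_set Set.Ioo_subset_Icc_self
  · filter_upwards [ae_restrict_mem measurableSet_Ioo] with x hx
    exact pow_nonneg hx.1.le j

lemma inner_int (m : ℕ) {a : ℝ} (ha : a ∈ Set.Ioo (0:ℝ) 1) :
    ∫⁻ b in Set.Ioo (0:ℝ) 1, ENNReal.ofReal (min a b ^ m) =
      ENNReal.ofReal (a ^ (m+1) / (m+1)) + ENNReal.ofReal (a ^ m * (1 - a)) := by
  have hsplit : Set.Ioo (0:ℝ) 1 = Set.Ioo 0 a ∪ Set.Ico a 1 := by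
    rw [Set.Ioo_union_Ico_eq_Ioo ha.1 ha.2.le]
  rw [hsplit, lintegral_union measurableSet_Ico (Set.disjoint_left.mpr fun x hx hx' => absurd hx.2 (not_lt.mpr hx'.1))]
  have h1 : ∫⁻ b in Set.Ioo (0:ℝ) a, ENNReal.ofReal (min a b ^ m) =
      ENNReal.ofReal (a ^ (m+1) / (m+1)) := by
    rw [← lint_pow a ha.1.le m]
    refine setLIntegral_congr_fun measurableSet_Ioo ?_
    intro b hb
    beta_reduce
    rw [min_eq_right hb.2.le]
  have h2 : ∫⁻ b in Set.Ico a 1, ENNReal.ofReal (min a b ^ m) =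
      ENNReal.ofReal (a ^ m * (1 - a)) := by
    have : ∫⁻ b in Set.Ico a 1, ENNReal.ofReal (min a b ^ m) =
        ∫⁻ _ in Set.Ico a 1, ENNReal.ofReal (a ^ m) := by
      refine setLIntegral_congr_fun measurableSet_Ico ?_
      intro b hb
      beta_reduce
      rw [min_eq_left hb.1]
    rw [this, setLIntegral_const, Real.volume_Ico, ← ENNReal.ofReal_mul (pow_nonneg ha.1.le m)]
  rw [h1, h2]

lemma key_integral (m : ℕ) :
    ∫⁻ a in Set.Ioo (0:ℝ) 1, ∫⁻ b in Set.Ioo (0:ℝ) 1, ENNReal.ofReal (min a b ^ m) ≤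
      ENNReal.ofReal (2 / ((m+1)*(m+2))) := by
  have hre : ∫⁻ a in Set.Ioo (0:ℝ) 1, ∫⁻ b in Set.Ioo (0:ℝ) 1, ENNReal.ofReal (min a b ^ m) =
      ∫⁻ a in Set.Ioo (0:ℝ) 1,
        (ENNReal.ofReal (a ^ (m+1) / (m+1)) + ENNReal.ofReal (a ^ m * (1 - a))) := by
    refine setLIntegral_congr_fun measurableSet_Ioo ?_
    intro a ha
    exact inner_int m ha
  rw [hre, lintegral_add_left (by fun_prop)]
  have t1 : ∫⁻ a in Set.Ioo (0:ℝ) 1, ENNReal.ofReal (a ^ (m+1) / (m+1)) =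
      ENNReal.ofReal (1 / ((m+1) * (m+2))) := by
    rw [← ofReal_integral_eq_lintegral_ofReal]
    · rw [← integral_Ioc_eq_integral_Ioo, ← intervalIntegral.integral_of_le zero_le_one]
      congr 1
      rw [intervalIntegral.integral_div, integral_pow]
      push_cast
      rw [one_pow, zero_pow (by omega)]
      field_simp
      ring
    · exact (Continuous.integrableOn_Icc (by continuity)).mono_set Set.Ioo_subset_Icc_self
    · filter_upwards [ae_restrict_mem measurableSet_Ioo] with x hx
      have := hx.1.le
      positivity
  have t2 : ∫⁻ a in Set.Ioo (0:ℝ) 1, ENNReal.ofReal (a ^ m * (1 - a)) =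
      ENNReal.ofReal (1/(m+1) - 1/(m+2)) := by
    rw [← ofReal_integral_eq_lintegral_ofReal]
    · rw [← integral_Ioc_eq_integral_Ioo, ← intervalIntegral.integral_of_le zero_le_one]
      congr 1
      have : ∀ x : ℝ, x ^ m * (1 - x) = x ^ m - x ^ (m+1) := fun x => by ring
      simp_rw [this]
      rw [intervalIntegral.integral_sub (intervalIntegral.intervalIntegrable_pow m)
        (intervalIntegral.intervalIntegrable_pow (m+1)), integral_pow, integral_pow]
      push_cast
      ring
    · exact (Continuous.integrableOn_Icc (by continuity)).mono_set Set.Ioo_subset_Icc_self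
    · filter_upwards [ae_restrict_mem measurableSet_Ioo] with x hx
      exact mul_nonneg (pow_nonneg hx.1.le m) (by linarith [hx.2.le])
  have h1 : (0:ℝ) < m+1 := by positivity
  have h2 : (0:ℝ) < m+2 := by positivity
  rw [t1, t2, ← ENNReal.ofReal_add (by positivity)
    (by rw [sub_nonneg]; exact one_div_le_one_div_of_le h1 (by linarith))]
  apply le_of_eq
  congr 1
  field_simp
  try ring

lemma pair_bound {n : ℕ} {Ω : Type*} [MeasurableSpace Ω] (μ : Measure Ω) [IsProbabilityMeasure μ]
    (H : Fin n → Ω → ℝ) (hmeas : ∀ i, Measurable (H i))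
    (hindep : iIndepFun H μ)
    (hunif : ∀ i, Measure.map (H i) μ = volume.restrict (Set.Ioo (0 : ℝ) 1))
    (u w : Fin n) (huw : u ≠ w) :
    μ {ω | ∀ x ∈ Finset.Ioo (min u w) (max u w), H x ω < min (H u ω) (H w ω)}
      ≤ ENNReal.ofReal (2 / (((Finset.Ioo (min u w) (max u w)).card + 1) *
         ((Finset.Ioo (min u w) (max u w)).card + 2))) := by
  set T : Finset (Fin n) := Finset.Ioo (min u w) (max u w) with hT
  set m : ℕ := T.card with hm
  set A : Ω → ℝ := fun ω => min (H u ω) (H w ω) with hA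
  set B : Ω → (T → ℝ) := fun ω i => H i ω with hB
  have hAmeas : Measurable A := (hmeas u).min (hmeas w)
  have hBmeas : Measurable B := measurable_pi_lambda _ fun i => hmeas i
  -- independence of A and B
  have hdisj : Disjoint ({u, w} : Finset (Fin n)) T := by
    rw [Finset.disjoint_left]
    intro x hx hxT
    rw [hT, Finset.mem_Ioo] at hxT
    rcases Finset.mem_insert.mp hx with rfl | hx
    · rcases le_total x w with h | h
      · rw [min_eq_left h] at hxT; exact absurd hxT.1 (lt_irrefl x)
      · rw [max_eq_left h] at hxT; exact absurd hxT.2 (lt_irrefl x)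
    · rw [Finset.mem_singleton] at hx; subst hx
      rcases le_total u x with h | h
      · rw [max_eq_right h] at hxT; exact absurd hxT.2 (lt_irrefl x)
      · rw [min_eq_right h] at hxT; exact absurd hxT.1 (lt_irrefl x)
  have hu' : u ∈ ({u, w} : Finset (Fin n)) := by simp
  have hw' : w ∈ ({u, w} : Finset (Fin n)) := by simp
  have hAB : IndepFun A B μ := by
    have h0 := hindep.indepFun_finset {u, w} T hdisj hmeas
    have h1 := h0.comp (φ := fun f : (({u, w} : Finset (Fin n)) → ℝ) =>
        min (f ⟨u, hu'⟩) (f ⟨w, hw'⟩)) (ψ := id)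
      (show Measurable (fun f : (({u, w} : Finset (Fin n)) → ℝ) => min (f ⟨u, hu'⟩) (f ⟨w, hw'⟩)) from
        (measurable_pi_apply (⟨u, hu'⟩ : ({u, w} : Finset (Fin n)))).min
        (measurable_pi_apply (⟨w, hw'⟩ : ({u, w} : Finset (Fin n))))) measurable_id
    exact h1
  -- rewrite the event
  set C : Set (ℝ × (T → ℝ)) := {p | ∀ i : T, p.2 i < p.1} with hC
  have hCmeas : MeasurableSet C := by
    have : C = ⋂ i : T, {p : ℝ × (T → ℝ) | p.2 i < p.1} := by
      ext p; simp [hC]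
    rw [this]
    exact MeasurableSet.iInter fun i =>
      measurableSet_lt (measurable_snd.eval) measurable_fst
  have hset : {ω | ∀ x ∈ T, H x ω < min (H u ω) (H w ω)} = (fun ω => (A ω, B ω)) ⁻¹' C := by
    ext ω
    simp only [Set.mem_setOf_eq, Set.mem_preimage, hC, hB, hA, Subtype.forall]
  haveI : IsProbabilityMeasure (μ.map A) := Measure.isProbabilityMeasure_map hAmeas.aemeasurable
  haveI : IsProbabilityMeasure (μ.map B) := Measure.isProbabilityMeasure_map hBmeas.aemeasurable
  have hmap : μ.map (fun ω => (A ω, B ω)) = (μ.map A).prod (μ.map B) :=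
    (indepFun_iff_map_prod_eq_prod_map_map hAmeas.aemeasurable hBmeas.aemeasurable).mp hAB
  have step1 : μ {ω | ∀ x ∈ T, H x ω < min (H u ω) (H w ω)} =
      ∫⁻ a, (μ.map B) (Prod.mk a ⁻¹' C) ∂(μ.map A) := by
    rw [hset, ← Measure.map_apply (hAmeas.prodMk hBmeas) hCmeas, hmap,
      Measure.prod_apply hCmeas]
  -- inner slice measure
  have hinner : ∀ a : ℝ, (μ.map B) (Prod.mk a ⁻¹' C) = (ENNReal.ofReal (min 1 a)) ^ m := by
    intro a
    have hslice : (Prod.mk a ⁻¹' C) = Set.pi Set.univ (fun _ : T => Set.Iio a) := by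
      ext y; simp [hC]
    have hsm : MeasurableSet (Set.pi Set.univ (fun _ : T => Set.Iio a)) :=
      MeasurableSet.univ_pi fun _ => measurableSet_Iio
    rw [hslice, Measure.map_apply hBmeas hsm]
    have hpre : B ⁻¹' (Set.pi Set.univ fun _ : T => Set.Iio a) =
        ⋂ x ∈ T, H x ⁻¹' Set.Iio a := by
      ext ω; simp [hB, Subtype.forall]
    rw [hpre, hindep.measure_inter_preimage_eq_mul T (fun _ _ => measurableSet_Iio)]
    have : ∀ x ∈ T, μ (H x ⁻¹' Set.Iio a) = ENNReal.ofReal (min 1 a) := by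
      intro x _
      rw [← Measure.map_apply (hmeas x) measurableSet_Iio, hunif x, ← nu]
      exact nu_Iio a
    rw [Finset.prod_congr rfl this, Finset.prod_const, hm]
  simp_rw [step1, hinner]
  -- law of A
  have hpair : μ.map (fun ω => (H u ω, H w ω)) = nu.prod nu := by
    rw [(indepFun_iff_map_prod_eq_prod_map_map (hmeas u).aemeasurable
      (hmeas w).aemeasurable).mp (hindep.indepFun huw), hunif u, hunif w, nu]
  have hminmeas : Measurable (fun p : ℝ × ℝ => min p.1 p.2) :=
    measurable_fst.min measurable_snd
  have hmapA : μ.map A = (nu.prod nu).map (fun p : ℝ × ℝ => min p.1 p.2) := by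
    rw [← hpair, Measure.map_map hminmeas ((hmeas u).prodMk (hmeas w))]
    rfl
  have hF : Measurable (fun a : ℝ => (ENNReal.ofReal (min 1 a)) ^ m) := by fun_prop
  rw [hmapA, lintegral_map hF hminmeas, lintegral_prod _ (by fun_prop)]
  have hnu : ∀ g : ℝ → ℝ≥0∞, ∫⁻ x, g x ∂nu = ∫⁻ x in Set.Ioo (0:ℝ) 1, g x := fun g => rfl
  rw [hnu]
  calc ∫⁻ a in Set.Ioo (0:ℝ) 1, ∫⁻ b, (ENNReal.ofReal (min 1 (min a b))) ^ m ∂nu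
      = ∫⁻ a in Set.Ioo (0:ℝ) 1, ∫⁻ b in Set.Ioo (0:ℝ) 1, ENNReal.ofReal (min a b ^ m) := by
        refine setLIntegral_congr_fun measurableSet_Ioo ?_
        intro a ha
        beta_reduce
        rw [hnu]
        refine setLIntegral_congr_fun measurableSet_Ioo ?_
        intro b hb
        beta_reduce
        have h1 : min 1 (min a b) = min a b :=
          min_eq_right (((min_le_left a b).trans ha.2.le))
        rw [h1, ENNReal.ofReal_pow (le_min ha.1.le hb.1.le)]
    _ ≤ ENNReal.ofReal (2 / ((m+1)*(m+2))) := key_integral m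

lemma tele (n : ℕ) (s : Finset ℕ) (hs : s ⊆ Finset.range n) :
    ∑ j ∈ s, (2:ℝ) / ((j+1)*(j+2)) ≤ 2 := by
  calc ∑ j ∈ s, (2:ℝ) / ((j+1)*(j+2))
      ≤ ∑ j ∈ Finset.range n, (2:ℝ) / ((j+1)*(j+2)) := by
        refine Finset.sum_le_sum_of_subset_of_nonneg hs fun j _ _ => by positivity
    _ = ∑ j ∈ Finset.range n, ((2:ℝ)/(j+1) - 2/(j+2)) := by
        refine Finset.sum_congr rfl fun j _ => ?_
        have h1 : ((j:ℝ)+1) ≠ 0 := by positivity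
        have h2 : ((j:ℝ)+2) ≠ 0 := by positivity
        field_simp
        ring
    _ = 2/(0+1) - 2/(n+1) := by
        have := Finset.sum_range_sub' (f := fun j : ℕ => (2:ℝ)/(j+1)) n
        convert this using 2 <;> push_cast <;> ring
    _ ≤ 2 := by
        have : (0:ℝ) ≤ 2/((n:ℝ)+1) := by positivity
        norm_num
        linarith


/-- In the Uniform model on `n` nodes, the expected degree of any node in the continuous skip
list network is at most `4`. -/
theorem uniform_expected_degree
    (n : ℕ)
    {Ω : Type*} [MeasurableSpace Ω] (μ : Measure Ω) [IsProbabilityMeasure μ]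
    (H : Fin n → Ω → ℝ) (hmeas : ∀ i, Measurable (H i))
    (hindep : iIndepFun H μ)
    (hunif : ∀ i, Measure.map (H i) μ = volume.restrict (Set.Ioo (0 : ℝ) 1))
    (u : Fin n) :
    ∫ ω, (degree (fun i => H i ω) u : ℝ) ∂μ ≤ 4 := by
  simp only [degree]
  classical
  set E : Fin n → Set Ω := fun w => {ω | IsEdge (fun i => H i ω) u w} with hE
  have hEeq : ∀ w, w ≠ u → E w =
      {ω | u ≠ w} ∩ ⋂ x ∈ Finset.Ioo (min u w) (max u w),
        {ω | H x ω < min (H u ω) (H w ω)} := by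
    intro w hw
    ext ω
    simp only [hE, Set.mem_setOf_eq, Set.mem_inter_iff, Set.mem_iInter, IsEdge,
      Finset.mem_Ioo]
    constructor
    · rintro ⟨h1, h2⟩; exact ⟨h1, fun x hx => h2 x hx.1 hx.2⟩
    · rintro ⟨h1, h2⟩; exact ⟨h1, fun x hx1 hx2 => h2 x ⟨hx1, hx2⟩⟩
  have hEmeas : ∀ w, MeasurableSet (E w) := by
    intro w
    by_cases hw : w = u
    · subst hw
      have : E w = ∅ := by ext ω; simp [hE, IsEdge]
      rw [this]; exact MeasurableSet.empty
    · rw [hEeq w hw]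
      refine MeasurableSet.inter (by simp [Ne.symm hw]) ?_
      exact MeasurableSet.biInter (Finset.Ioo _ _).countable_toSet fun x _ =>
        measurableSet_lt (hmeas x) ((hmeas u).min (hmeas w))
  have hdeg : ∀ ω, ((Finset.univ.filter fun w => IsEdge (fun i => H i ω) u w).card : ℝ) =
      ∑ w : Fin n, Set.indicator (E w) (fun _ => (1:ℝ)) ω := by
    intro ω
    rw [Finset.card_filter]
    push_cast
    refine Finset.sum_congr rfl fun w _ => ?_
    rw [Set.indicator_apply]
    by_cases h : IsEdge (fun i => H i ω) u w <;> simp [hE, h]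
  have hint : ∫ ω, ((Finset.univ.filter fun w => IsEdge (fun i => H i ω) u w).card : ℝ) ∂μ =
      ∑ w : Fin n, (μ (E w)).toReal := by
    rw [integral_congr_ae (ae_of_all _ hdeg),
      integral_finset_sum _ (fun w _ => (integrable_const (1:ℝ)).indicator (hEmeas w))]
    refine Finset.sum_congr rfl fun w _ => ?_
    exact integral_indicator_one (hEmeas w)
  rw [hint]
  -- per-w bound
  have hbnd : ∀ w, w ≠ u → (μ (E w)).toReal ≤
      2 / (((Finset.Ioo (min u w) (max u w)).card + 1) *
        ((Finset.Ioo (min u w) (max u w)).card + 2)) := by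
    intro w hw
    have hsub : E w ⊆ {ω | ∀ x ∈ Finset.Ioo (min u w) (max u w),
        H x ω < min (H u ω) (H w ω)} := by
      rw [hEeq w hw]
      refine Set.inter_subset_right.trans ?_
      intro ω hω x hx
      exact Set.mem_iInter.mp (Set.mem_iInter.mp hω x) hx
    have := (measure_mono hsub).trans
      (pair_bound μ H hmeas hindep hunif u w (Ne.symm hw))
    exact ENNReal.toReal_le_of_le_ofReal (by positivity) this
  have hEu : (μ (E u)).toReal = 0 := by
    have : E u = ∅ := by ext ω; simp [hE, IsEdge]
    rw [this]; simp
  -- split the sum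
  have hdisj2 : Disjoint (Finset.Iio u) (insert u (Finset.Ioi u)) := by
    rw [Finset.disjoint_left]
    intro x hx hx'
    rw [Finset.mem_Iio] at hx
    rcases Finset.mem_insert.mp hx' with rfl | hx'
    · exact absurd hx (lt_irrefl x)
    · exact absurd (hx.trans (Finset.mem_Ioi.mp hx')) (lt_irrefl x)
  have hsplit : (Finset.univ : Finset (Fin n)) = Finset.Iio u ∪ insert u (Finset.Ioi u) := by
    ext w
    simp only [Finset.mem_univ, Finset.mem_union, Finset.mem_insert, Finset.mem_Iio,
      Finset.mem_Ioi, true_iff]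
    rcases lt_trichotomy w u with h | h | h <;> tauto
  rw [hsplit, Finset.sum_union hdisj2, Finset.sum_insert (by simp), hEu, zero_add]
  have hR : ∑ w ∈ Finset.Ioi u, (μ (E w)).toReal ≤ 2 := by
    set e : Fin n → ℕ := fun w => w.val - u.val - 1 with he
    calc ∑ w ∈ Finset.Ioi u, (μ (E w)).toReal
        ≤ ∑ w ∈ Finset.Ioi u, (2:ℝ) / ((e w + 1) * (e w + 2)) := by
          refine Finset.sum_le_sum fun w hw => ?_
          have huw : u < w := Finset.mem_Ioi.mp hw
          have hval : u.val < w.val := huw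
          have hcard : (Finset.Ioo (min u w) (max u w)).card = e w := by
            rw [min_eq_left huw.le, max_eq_right huw.le, Fin.card_Ioo]
          have h := hbnd w huw.ne'
          rw [hcard] at h
          exact h
      _ = ∑ j ∈ (Finset.Ioi u).image e, (2:ℝ) / ((j + 1) * (j + 2)) := by
          refine (Finset.sum_image (f := fun j : ℕ => (2:ℝ) / ((j + 1) * (j + 2))) ?_).symm
          intro x hx y hy hxy
          have hx' : u.val < x.val := Fin.lt_def.mp (Finset.mem_Ioi.mp hx)
          have hy' : u.val < y.val := Fin.lt_def.mp (Finset.mem_Ioi.mp hy)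
          rw [he] at hxy
          simp only [] at hxy
          exact Fin.ext (by omega)
      _ ≤ 2 := by
          refine tele n _ ?_
          intro j hj
          obtain ⟨w, _, rfl⟩ := Finset.mem_image.mp hj
          have := w.isLt
          rw [Finset.mem_range, he]
          simp only []
          omega
  have hL : ∑ w ∈ Finset.Iio u, (μ (E w)).toReal ≤ 2 := by
    set e : Fin n → ℕ := fun w => u.val - w.val - 1 with he
    calc ∑ w ∈ Finset.Iio u, (μ (E w)).toReal
        ≤ ∑ w ∈ Finset.Iio u, (2:ℝ) / ((e w + 1) * (e w + 2)) := by
          refine Finset.sum_le_sum fun w hw => ?_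
          have huw : w < u := Finset.mem_Iio.mp hw
          have hval : w.val < u.val := huw
          have hcard : (Finset.Ioo (min u w) (max u w)).card = e w := by
            rw [min_eq_right huw.le, max_eq_left huw.le, Fin.card_Ioo]
          have h := hbnd w huw.ne
          rw [hcard] at h
          exact h
      _ = ∑ j ∈ (Finset.Iio u).image e, (2:ℝ) / ((j + 1) * (j + 2)) := by
          refine (Finset.sum_image (f := fun j : ℕ => (2:ℝ) / ((j + 1) * (j + 2))) ?_).symm
          intro x hx y hy hxy
          have hx' : x.val < u.val := Fin.lt_def.mp (Finset.mem_Iio.mp hx)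
          have hy' : y.val < u.val := Fin.lt_def.mp (Finset.mem_Iio.mp hy)
          rw [he] at hxy
          simp only [] at hxy
          exact Fin.ext (by omega)
      _ ≤ 2 := by
          refine tele n _ ?_
          intro j hj
          obtain ⟨w, _, rfl⟩ := Finset.mem_image.mp hj
          have := u.isLt
          rw [Finset.mem_range, he]
          simp only []
          omega
  linarith


end P2P
end

section
/- There is an absolute constant C such that for every n ≥ 2 and every nonnegative demand matrix W on V = {1,…,n}, there exists an assignment of integer predictions p : V → {1,…,⌈ln n⌉} with E[Σ_{u≠v} W(u,v)·d_{LASLiN(p)}(u,v)] ≤ C · min_{g : V → {1,…,⌈ln n⌉}} Σ_{u≠v} W(u,v)·d_g(u,v), where d_g denotes routing distance in the (deterministic) skip list network with height function g; i.e., LASLiN is O(1)-consistent with respect to an optimum static skip list network of logarithmically bounded heights. -/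
open scoped Classical ENNReal NNReal
open MeasureTheory ProbabilityTheory

namespace P2P

variable {n : ℕ}

variable {α : Type*} [LinearOrder α]

/-- nodes visited by the greedy route from `u` to `v` (for `u ≤ v`). -/
noncomputable def goodR (h : Fin n → α) (u v : Fin n) : Finset (Fin n) :=
  Finset.univ.filter fun z => u ≤ z ∧ z ≤ v ∧
    ((∀ x, u ≤ x → x < z → h x ≤ h z) ∨ (∀ x, z < x → x ≤ v → h x ≤ h z))

lemma mem_goodR {h : Fin n → α} {u v z : Fin n} :
    z ∈ goodR h u v ↔ u ≤ z ∧ z ≤ v ∧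
      ((∀ x, u ≤ x → x < z → h x ≤ h z) ∨ (∀ x, z < x → x ≤ v → h x ≤ h z)) := by
  simp [goodR]

lemma left_mem_goodR {h : Fin n → α} {u v : Fin n} (huv : u ≤ v) : u ∈ goodR h u v :=
  mem_goodR.2 ⟨le_refl _, huv, Or.inl fun x hux hxu => absurd hux (not_le.2 hxu)⟩

lemma right_mem_goodR {h : Fin n → α} {u v : Fin n} (huv : u ≤ v) : v ∈ goodR h u v :=
  mem_goodR.2 ⟨huv, le_refl _, Or.inr fun x hvx hxv => absurd hxv (not_le.2 hvx)⟩

lemma nextHop_specR (h : Fin n → α) {u v c : Fin n} (huc : u ≤ c) (hcv : c < v)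
    (hc : c ∈ goodR h u v) :
    nextHop h v c ∈ goodR h u v ∧ c < nextHop h v c ∧
      ∀ z ∈ goodR h u v, c < z → nextHop h v c ≤ z := by
  classical
  set F : Finset (Fin n) :=
    Finset.univ.filter (fun y => IsEdge h c y ∧ c < y ∧ y ≤ v) with hF
  -- the successor of c is an edge
  have hcv' : (c : ℕ) < (v : ℕ) := hcv
  have hsl : (c : ℕ) + 1 < n := lt_of_le_of_lt hcv' v.isLt
  set cs : Fin n := ⟨(c : ℕ) + 1, hsl⟩ with hcs
  have hccs : c < cs := by simp [hcs, Fin.lt_def]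
  have hcsv : cs ≤ v := by
    simp only [hcs, Fin.le_def]; exact hcv'
  have hedge_cs : IsEdge h c cs := by
    refine ⟨ne_of_lt hccs, fun x h1 h2 => ?_⟩
    rw [min_eq_left hccs.le] at h1
    rw [max_eq_right hccs.le] at h2
    exact absurd (Fin.lt_def.1 h2) (by omega : ¬ ((x:ℕ) < (c:ℕ)+1))
  have hFne : F.Nonempty := ⟨cs, by simp [hF, hedge_cs, hccs, hcsv]⟩
  have hNdef : nextHop h v c = F.max' hFne := by
    rw [nextHop, if_pos hcv, ← hF, ← Finset.coe_max' hFne, WithBot.unbotD_coe]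
  set N := F.max' hFne with hN
  have hNF : N ∈ F := Finset.max'_mem _ _
  have hNmax : ∀ y ∈ F, y ≤ N := fun y hy => Finset.le_max' _ _ hy
  rw [Finset.mem_filter] at hNF
  obtain ⟨-, hNedge, hcN, hNv⟩ := hNF
  rw [hNdef]
  -- T : candidates for ascending step
  set T : Finset (Fin n) :=
    Finset.univ.filter (fun z => c < z ∧ z ≤ v ∧ h c ≤ h z) with hT
  by_cases hTne : T.Nonempty
  · -- ascending case : N = min' T
    set t := T.min' hTne with ht
    have htT : t ∈ T := Finset.min'_mem _ _
    rw [Finset.mem_filter] at htT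
    obtain ⟨-, hct, htv, hht⟩ := htT
    have htmin : ∀ z, c < z → z ≤ v → h c ≤ h z → t ≤ z := by
      intro z h1 h2 h3
      exact Finset.min'_le _ _ (by simp [hT, h1, h2, h3])
    have hbelow : ∀ z, c < z → z < t → h z < h c := by
      intro z h1 h2
      by_contra hle
      exact absurd (htmin z h1 (le_trans h2.le htv) (not_lt.1 hle)) (not_le.2 h2)
    have htF : t ∈ F := by
      refine Finset.mem_filter.2 ⟨Finset.mem_univ _, ⟨ne_of_lt hct, fun x h1 h2 => ?_⟩, hct, htv⟩
      rw [min_eq_left hct.le] at h1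
      rw [max_eq_right hct.le] at h2
      exact lt_min (hbelow x h1 h2) (lt_of_lt_of_le (hbelow x h1 h2) hht)
    have hNt : N = t := by
      refine le_antisymm ?_ (hNmax t htF)
      by_contra hlt
      push_neg at hlt
      have h2 := hNedge.2 t (by rwa [min_eq_left hcN.le]) (by rwa [max_eq_right hcN.le])
      have : h t < h c := lt_of_lt_of_le h2 (min_le_left _ _)
      exact absurd hht (not_le.2 this)
    rw [hNt]
    refine ⟨mem_goodR.2 ⟨le_trans huc hct.le, htv, ?_⟩, hct, ?_⟩
    · rcases (mem_goodR.1 hc).2.2 with hL | hR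
      · refine Or.inl fun x hux hxt => ?_
        rcases lt_trichotomy x c with hxc | hxc | hxc
        · exact le_trans (hL x hux hxc) hht
        · rw [hxc]; exact hht
        · exact (hbelow x hxc hxt).le.trans hht
      · exact Or.inr fun x htx hxv => le_trans (hR x (hct.trans htx) hxv) hht
    · intro z hz hcz
      by_contra hlt
      push_neg at hlt
      have hzv : z ≤ v := (mem_goodR.1 hz).2.1
      have hzc : h z < h c := hbelow z hcz hlt
      rcases (mem_goodR.1 hz).2.2 with hL | hR
      · exact absurd (hL c huc hcz) (not_le.2 hzc)
      · exact absurd (hR t hlt htv) (not_le.2 (lt_of_lt_of_le hzc hht))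
  · -- descending case
    push_neg at hTne
    have hbelow : ∀ z, c < z → z ≤ v → h z < h c := by
      intro z h1 h2
      by_contra hle
      have : z ∈ T := by simp [hT, h1, h2, not_lt.1 hle]
      simp [hTne] at this
    -- N is the leftmost argmax of (c, v]
    have hRN : ∀ z, N < z → z ≤ v → h z ≤ h N := by
      intro z hNz hzv
      by_contra hgt
      push_neg at hgt
      -- take the least such z
      set T2 : Finset (Fin n) :=
        Finset.univ.filter (fun w => N < w ∧ w ≤ v ∧ h N < h w) with hT2
      have hT2ne : T2.Nonempty := ⟨z, by simp [hT2, hNz, hzv, hgt]⟩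
      set t' := T2.min' hT2ne with ht'
      have ht'T : t' ∈ T2 := Finset.min'_mem _ _
      rw [Finset.mem_filter] at ht'T
      obtain ⟨-, hNt', ht'v, hht'⟩ := ht'T
      have ht'min : ∀ w, N < w → w < t' → h w ≤ h N := by
        intro w h1 h2
        by_contra hle
        push_neg at hle
        exact absurd (Finset.min'_le _ _ (by simp [hT2, h1, le_trans h2.le ht'v, hle]))
          (not_le.2 h2)
      have ht'F : t' ∈ F := by
        refine Finset.mem_filter.2 ⟨Finset.mem_univ _,
          ⟨ne_of_lt (hcN.trans hNt'), fun x h1 h2 => ?_⟩, hcN.trans hNt', ht'v⟩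
        rw [min_eq_left (hcN.trans hNt').le] at h1
        rw [max_eq_right (hcN.trans hNt').le] at h2
        have hx1 : h x < h c := hbelow x h1 (le_trans h2.le ht'v)
        have hx2 : h x < h t' := by
          rcases lt_trichotomy x N with hxN | hxN | hxN
          · have := hNedge.2 x (by rwa [min_eq_left hcN.le]) (by rwa [max_eq_right hcN.le])
            exact lt_of_lt_of_le this (le_trans (min_le_right _ _) hht'.le)
          · rw [hxN]; exact hht'
          · exact lt_of_le_of_lt (ht'min x hxN h2) hht'
        exact lt_min hx1 hx2
      exact absurd (hNmax t' ht'F) (not_le.2 hNt')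
    refine ⟨mem_goodR.2 ⟨le_trans huc hcN.le, hNv, Or.inr hRN⟩, hcN, ?_⟩
    intro z hz hcz
    by_contra hlt
    push_neg at hlt
    have hzv : z ≤ v := (mem_goodR.1 hz).2.1
    have hzc : h z < h c := hbelow z hcz hzv
    have hzN : h z < h N := by
      have := hNedge.2 z (by rwa [min_eq_left hcN.le]) (by rwa [max_eq_right hcN.le])
      exact lt_of_lt_of_le this (min_le_right _ _)
    rcases (mem_goodR.1 hz).2.2 with hL | hR
    · exact absurd (hL c huc hcz) (not_le.2 hzc)
    · exact absurd (hR N hlt hNv) (not_le.2 hzN)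

lemma routeAux_lengthR (h : Fin n → α) {u v : Fin n} :
    ∀ (fuel : ℕ) (c : Fin n), u ≤ c → c ≤ v → c ∈ goodR h u v →
      ((goodR h u v).filter (fun z => c < z)).card ≤ fuel →
      (routeAux h v fuel c).length = ((goodR h u v).filter (fun z => c ≤ z)).card := by
  intro fuel
  induction fuel with
  | zero =>
    intro c huc hcv hcS hcard
    have hcv' : c = v := by
      by_contra hne
      have : v ∈ (goodR h u v).filter (fun z => c < z) :=
        Finset.mem_filter.2 ⟨right_mem_goodR (le_trans huc hcv), lt_of_le_of_ne hcv hne⟩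
      have := Finset.card_pos.2 ⟨v, this⟩
      omega
    subst hcv'
    have : (goodR h u c).filter (fun z => c ≤ z) = {c} := by
      ext z
      simp only [Finset.mem_filter, Finset.mem_singleton]
      constructor
      · rintro ⟨hz, hcz⟩
        exact le_antisymm ((mem_goodR.1 hz).2.1) hcz
      · rintro rfl
        exact ⟨hcS, le_refl _⟩
    rw [routeAux, this, Finset.card_singleton, List.length_singleton]
  | succ fuel ih =>
    intro c huc hcv hcS hcard
    by_cases hceq : c = v
    · subst hceq
      have : (goodR h u c).filter (fun z => c ≤ z) = {c} := by
        ext z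
        simp only [Finset.mem_filter, Finset.mem_singleton]
        constructor
        · rintro ⟨hz, hcz⟩
          exact le_antisymm ((mem_goodR.1 hz).2.1) hcz
        · rintro rfl
          exact ⟨hcS, le_refl _⟩
      rw [routeAux, if_pos rfl, this, Finset.card_singleton, List.length_singleton]
    · have hclt : c < v := lt_of_le_of_ne hcv hceq
      obtain ⟨hNS, hcN, hNmin⟩ := nextHop_specR h huc hclt hcS
      set N := nextHop h v c with hNdef
      have hNv : N ≤ v := (mem_goodR.1 hNS).2.1
      have hsub : (goodR h u v).filter (fun z => N < z) ⊂
          (goodR h u v).filter (fun z => c < z) := by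
        refine Finset.ssubset_iff_of_subset ?_ |>.2 ?_
        · intro z hz
          rw [Finset.mem_filter] at hz ⊢
          exact ⟨hz.1, hcN.trans hz.2⟩
        · exact ⟨N, Finset.mem_filter.2 ⟨hNS, hcN⟩, by simp⟩
      have hcard' : ((goodR h u v).filter (fun z => N < z)).card ≤ fuel := by
        have := Finset.card_lt_card hsub
        omega
      have hrec := ih N (le_trans huc hcN.le) hNv hNS hcard'
      rw [routeAux, if_neg hceq, List.length_cons, hrec]
      have hins : (goodR h u v).filter (fun z => c ≤ z) =
          insert c ((goodR h u v).filter (fun z => N ≤ z)) := by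
        ext z
        simp only [Finset.mem_filter, Finset.mem_insert]
        constructor
        · rintro ⟨hz, hcz⟩
          rcases eq_or_lt_of_le hcz with heq | hlt
          · exact Or.inl heq.symm
          · exact Or.inr ⟨hz, hNmin z hz hlt⟩
        · rintro (rfl | ⟨hz, hNz⟩)
          · exact ⟨hcS, le_refl _⟩
          · exact ⟨hz, le_trans hcN.le hNz⟩
      rw [hins, Finset.card_insert_of_notMem (by
        simp only [Finset.mem_filter, not_and]
        exact fun _ hNc => absurd hNc (not_le.2 hcN))]

lemma dist_eqR (h : Fin n → α) {u v : Fin n} (huv : u ≤ v) :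
    dist h u v = (goodR h u v).card - 1 := by
  have hcard : ((goodR h u v).filter (fun z => u < z)).card ≤ n := by
    calc ((goodR h u v).filter (fun z => u < z)).card
        ≤ (Finset.univ : Finset (Fin n)).card := Finset.card_le_univ _
      _ = n := Finset.card_fin n
  have := routeAux_lengthR h n u (le_refl u) huv (left_mem_goodR huv) hcard
  rw [dist, route, this]
  congr 1
  rw [Finset.filter_true_of_mem]
  exact fun z hz => (mem_goodR.1 hz).1

/-- nodes visited by the greedy route from `u` to `v` (for `v ≤ u`). -/
noncomputable def goodL (h : Fin n → α) (u v : Fin n) : Finset (Fin n) :=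
  Finset.univ.filter fun z => v ≤ z ∧ z ≤ u ∧
    ((∀ x, x ≤ u → z < x → h x ≤ h z) ∨ (∀ x, v ≤ x → x < z → h x ≤ h z))

lemma mem_goodL {h : Fin n → α} {u v z : Fin n} :
    z ∈ goodL h u v ↔ v ≤ z ∧ z ≤ u ∧
      ((∀ x, x ≤ u → z < x → h x ≤ h z) ∨ (∀ x, v ≤ x → x < z → h x ≤ h z)) := by
  simp [goodL]

lemma left_mem_goodL {h : Fin n → α} {u v : Fin n} (hvu : v ≤ u) : u ∈ goodL h u v :=
  mem_goodL.2 ⟨hvu, le_refl _, Or.inl fun x hxu hux => absurd hxu (not_le.2 hux)⟩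

lemma right_mem_goodL {h : Fin n → α} {u v : Fin n} (hvu : v ≤ u) : v ∈ goodL h u v :=
  mem_goodL.2 ⟨le_refl _, hvu, Or.inr fun x hvx hxv => absurd hvx (not_le.2 hxv)⟩

lemma nextHop_specL (h : Fin n → α) {u v c : Fin n} (hcu : c ≤ u) (hvc : v < c)
    (hc : c ∈ goodL h u v) :
    nextHop h v c ∈ goodL h u v ∧ nextHop h v c < c ∧
      ∀ z ∈ goodL h u v, z < c → z ≤ nextHop h v c := by
  classical
  set F : Finset (Fin n) :=
    Finset.univ.filter (fun y => IsEdge h c y ∧ v ≤ y ∧ y < c) with hF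
  have hvc' : (v : ℕ) < (c : ℕ) := hvc
  set cs : Fin n := ⟨(c : ℕ) - 1, lt_trans (by omega : (c : ℕ) - 1 < (c : ℕ)) c.isLt⟩
    with hcs
  have hcsc : cs < c := by simp only [hcs, Fin.lt_def]; omega
  have hvcs : v ≤ cs := by simp only [hcs, Fin.le_def]; omega
  have hedge_cs : IsEdge h c cs := by
    refine ⟨(ne_of_lt hcsc).symm, fun x h1 h2 => ?_⟩
    rw [min_eq_right hcsc.le] at h1
    rw [max_eq_left hcsc.le] at h2
    have hx1 := Fin.lt_def.1 h1
    have hx2 := Fin.lt_def.1 h2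
    simp only [hcs] at hx1
    omega
  have hFne : F.Nonempty := ⟨cs, by simp [hF, hedge_cs, hcsc, hvcs]⟩
  have hNdef : nextHop h v c = F.min' hFne := by
    rw [nextHop, if_neg (not_lt.2 hvc.le), if_pos hvc, ← hF, ← Finset.coe_min' hFne,
      WithTop.untopD_coe]
  set N := F.min' hFne with hN
  have hNF : N ∈ F := Finset.min'_mem _ _
  have hNmin : ∀ y ∈ F, N ≤ y := fun y hy => Finset.min'_le _ _ hy
  rw [Finset.mem_filter] at hNF
  obtain ⟨-, hNedge, hvN, hNc⟩ := hNF
  rw [hNdef]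
  set T : Finset (Fin n) :=
    Finset.univ.filter (fun z => z < c ∧ v ≤ z ∧ h c ≤ h z) with hT
  by_cases hTne : T.Nonempty
  · set t := T.max' hTne with ht
    have htT : t ∈ T := Finset.max'_mem _ _
    rw [Finset.mem_filter] at htT
    obtain ⟨-, htc, hvt, hht⟩ := htT
    have htmax : ∀ z, z < c → v ≤ z → h c ≤ h z → z ≤ t := by
      intro z h1 h2 h3
      exact Finset.le_max' _ _ (by simp [hT, h1, h2, h3])
    have hbelow : ∀ z, z < c → t < z → h z < h c := by
      intro z h1 h2
      by_contra hle
      exact absurd (htmax z h1 (le_trans hvt h2.le) (not_lt.1 hle)) (not_le.2 h2)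
    have htF : t ∈ F := by
      refine Finset.mem_filter.2 ⟨Finset.mem_univ _,
        ⟨(ne_of_lt htc).symm, fun x h1 h2 => ?_⟩, hvt, htc⟩
      rw [min_eq_right htc.le] at h1
      rw [max_eq_left htc.le] at h2
      exact lt_min (hbelow x h2 h1) (lt_of_lt_of_le (hbelow x h2 h1) hht)
    have hNt : N = t := by
      refine le_antisymm (hNmin t htF) ?_
      by_contra hlt
      push_neg at hlt
      have h2 := hNedge.2 t (by rwa [min_eq_right hNc.le]) (by rwa [max_eq_left hNc.le])
      have : h t < h c := lt_of_lt_of_le h2 (min_le_left _ _)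
      exact absurd hht (not_le.2 this)
    rw [hNt]
    refine ⟨mem_goodL.2 ⟨hvt, le_trans htc.le hcu, ?_⟩, htc, ?_⟩
    · rcases (mem_goodL.1 hc).2.2 with hL | hR
      · refine Or.inl fun x hxu htx => ?_
        rcases lt_trichotomy c x with hxc | hxc | hxc
        · exact le_trans (hL x hxu hxc) hht
        · rw [← hxc]; exact hht
        · exact (hbelow x hxc htx).le.trans hht
      · exact Or.inr fun x hxv hxt => le_trans (hR x hxv (hxt.trans htc)) hht
    · intro z hz hcz
      by_contra hlt
      push_neg at hlt
      have hzv : v ≤ z := (mem_goodL.1 hz).1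
      have hzc : h z < h c := hbelow z hcz hlt
      rcases (mem_goodL.1 hz).2.2 with hL | hR
      · exact absurd (hL c hcu hcz) (not_le.2 hzc)
      · exact absurd (hR t hvt hlt) (not_le.2 (lt_of_lt_of_le hzc hht))
  · push_neg at hTne
    have hbelow : ∀ z, z < c → v ≤ z → h z < h c := by
      intro z h1 h2
      by_contra hle
      have : z ∈ T := by simp [hT, h1, h2, not_lt.1 hle]
      simp [hTne] at this
    have hRN : ∀ z, z < N → v ≤ z → h z ≤ h N := by
      intro z hNz hzv
      by_contra hgt
      push_neg at hgt
      set T2 : Finset (Fin n) :=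
        Finset.univ.filter (fun w => w < N ∧ v ≤ w ∧ h N < h w) with hT2
      have hT2ne : T2.Nonempty := ⟨z, by simp [hT2, hNz, hzv, hgt]⟩
      set t' := T2.max' hT2ne with ht'
      have ht'T : t' ∈ T2 := Finset.max'_mem _ _
      rw [Finset.mem_filter] at ht'T
      obtain ⟨-, hNt', ht'v, hht'⟩ := ht'T
      have ht'max : ∀ w, w < N → t' < w → h w ≤ h N := by
        intro w h1 h2
        by_contra hle
        push_neg at hle
        exact absurd (Finset.le_max' _ _ (by simp [hT2, h1, le_trans ht'v h2.le, hle]))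
          (not_le.2 h2)
      have ht'F : t' ∈ F := by
        refine Finset.mem_filter.2 ⟨Finset.mem_univ _,
          ⟨(ne_of_lt (hNt'.trans hNc)).symm, fun x h1 h2 => ?_⟩, ht'v, hNt'.trans hNc⟩
        rw [min_eq_right (hNt'.trans hNc).le] at h1
        rw [max_eq_left (hNt'.trans hNc).le] at h2
        have hx1 : h x < h c := hbelow x h2 (le_trans ht'v h1.le)
        have hx2 : h x < h t' := by
          rcases lt_trichotomy N x with hxN | hxN | hxN
          · have := hNedge.2 x (by rwa [min_eq_right hNc.le]) (by rwa [max_eq_left hNc.le])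
            exact lt_of_lt_of_le this (le_trans (min_le_right _ _) hht'.le)
          · rw [← hxN]; exact hht'
          · exact lt_of_le_of_lt (ht'max x hxN h1) hht'
        exact lt_min hx1 hx2
      exact absurd (hNmin t' ht'F) (not_le.2 hNt')
    refine ⟨mem_goodL.2 ⟨hvN, le_trans hNc.le hcu, Or.inr fun x h1 h2 => hRN x h2 h1⟩, hNc, ?_⟩
    intro z hz hcz
    by_contra hlt
    push_neg at hlt
    have hzv : v ≤ z := (mem_goodL.1 hz).1
    have hzc : h z < h c := hbelow z hcz hzv
    have hzN : h z < h N := by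
      have := hNedge.2 z (by rwa [min_eq_right hNc.le]) (by rwa [max_eq_left hNc.le])
      exact lt_of_lt_of_le this (min_le_right _ _)
    rcases (mem_goodL.1 hz).2.2 with hL | hR
    · exact absurd (hL c hcu hcz) (not_le.2 hzc)
    · exact absurd (hR N hvN hlt) (not_le.2 hzN)

lemma routeAux_lengthL (h : Fin n → α) {u v : Fin n} :
    ∀ (fuel : ℕ) (c : Fin n), c ≤ u → v ≤ c → c ∈ goodL h u v →
      ((goodL h u v).filter (fun z => z < c)).card ≤ fuel →
      (routeAux h v fuel c).length = ((goodL h u v).filter (fun z => z ≤ c)).card := by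
  intro fuel
  induction fuel with
  | zero =>
    intro c huc hcv hcS hcard
    have hcv' : c = v := by
      by_contra hne
      have : v ∈ (goodL h u v).filter (fun z => z < c) :=
        Finset.mem_filter.2 ⟨right_mem_goodL (le_trans hcv huc),
          lt_of_le_of_ne hcv (Ne.symm hne)⟩
      have := Finset.card_pos.2 ⟨v, this⟩
      omega
    subst hcv'
    have : (goodL h u c).filter (fun z => z ≤ c) = {c} := by
      ext z
      simp only [Finset.mem_filter, Finset.mem_singleton]
      constructor
      · rintro ⟨hz, hcz⟩
        exact le_antisymm hcz ((mem_goodL.1 hz).1)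
      · rintro rfl
        exact ⟨hcS, le_refl _⟩
    rw [routeAux, this, Finset.card_singleton, List.length_singleton]
  | succ fuel ih =>
    intro c huc hcv hcS hcard
    by_cases hceq : c = v
    · subst hceq
      have : (goodL h u c).filter (fun z => z ≤ c) = {c} := by
        ext z
        simp only [Finset.mem_filter, Finset.mem_singleton]
        constructor
        · rintro ⟨hz, hcz⟩
          exact le_antisymm hcz ((mem_goodL.1 hz).1)
        · rintro rfl
          exact ⟨hcS, le_refl _⟩
      rw [routeAux, if_pos rfl, this, Finset.card_singleton, List.length_singleton]
    · have hclt : v < c := lt_of_le_of_ne hcv (Ne.symm hceq)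
      obtain ⟨hNS, hcN, hNmin⟩ := nextHop_specL h huc hclt hcS
      set N := nextHop h v c with hNdef
      have hNv : v ≤ N := (mem_goodL.1 hNS).1
      have hsub : (goodL h u v).filter (fun z => z < N) ⊂
          (goodL h u v).filter (fun z => z < c) := by
        refine Finset.ssubset_iff_of_subset ?_ |>.2 ?_
        · intro z hz
          rw [Finset.mem_filter] at hz ⊢
          exact ⟨hz.1, hz.2.trans hcN⟩
        · exact ⟨N, Finset.mem_filter.2 ⟨hNS, hcN⟩, by simp⟩
      have hcard' : ((goodL h u v).filter (fun z => z < N)).card ≤ fuel := by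
        have := Finset.card_lt_card hsub
        omega
      have hrec := ih N (le_trans hcN.le huc) hNv hNS hcard'
      rw [routeAux, if_neg hceq, List.length_cons, hrec]
      have hins : (goodL h u v).filter (fun z => z ≤ c) =
          insert c ((goodL h u v).filter (fun z => z ≤ N)) := by
        ext z
        simp only [Finset.mem_filter, Finset.mem_insert]
        constructor
        · rintro ⟨hz, hcz⟩
          rcases eq_or_lt_of_le hcz with heq | hlt
          · exact Or.inl heq
          · exact Or.inr ⟨hz, hNmin z hz hlt⟩
        · rintro (rfl | ⟨hz, hNz⟩)
          · exact ⟨hcS, le_refl _⟩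
          · exact ⟨hz, le_trans hNz hcN.le⟩
      rw [hins, Finset.card_insert_of_notMem (by
        simp only [Finset.mem_filter, not_and]
        exact fun _ hNc => absurd hNc (not_le.2 hcN))]

lemma dist_eqL (h : Fin n → α) {u v : Fin n} (hvu : v ≤ u) :
    dist h u v = (goodL h u v).card - 1 := by
  have hcard : ((goodL h u v).filter (fun z => z < u)).card ≤ n := by
    calc ((goodL h u v).filter (fun z => z < u)).card
        ≤ (Finset.univ : Finset (Fin n)).card := Finset.card_le_univ _
      _ = n := Finset.card_fin n
  have := routeAux_lengthL h n u (le_refl u) hvu (left_mem_goodL hvu) hcard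
  rw [dist, route, this]
  congr 1
  rw [Finset.filter_true_of_mem]
  exact fun z hz => (mem_goodL.1 hz).2.1


lemma jitter_le {g : Fin n → ℕ} {U : Fin n → ℝ} (hU : ∀ i, U i ∈ Set.Ioo (0:ℝ) 1)
    {x z : Fin n} (h : (g x : ℝ) + U x ≤ (g z : ℝ) + U z) : g x ≤ g z := by
  by_contra hlt
  push_neg at hlt
  have h1 : (g z : ℝ) + 1 ≤ (g x : ℝ) := by exact_mod_cast hlt
  have h2 := (hU x).1
  have h3 := (hU z).2
  linarith

lemma dist_jitter_le (g : Fin n → ℕ) (U : Fin n → ℝ) (hU : ∀ i, U i ∈ Set.Ioo (0:ℝ) 1)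
    (u v : Fin n) : dist (fun i => (g i : ℝ) + U i) u v ≤ dist g u v := by
  rcases le_total u v with huv | hvu
  · rw [dist_eqR _ huv, dist_eqR _ huv]
    refine Nat.sub_le_sub_right (Finset.card_le_card ?_) 1
    intro z hz
    rw [mem_goodR] at hz ⊢
    refine ⟨hz.1, hz.2.1, ?_⟩
    rcases hz.2.2 with hL | hR
    · exact Or.inl fun x h1 h2 => jitter_le hU (hL x h1 h2)
    · exact Or.inr fun x h1 h2 => jitter_le hU (hR x h1 h2)
  · rw [dist_eqL _ hvu, dist_eqL _ hvu]
    refine Nat.sub_le_sub_right (Finset.card_le_card ?_) 1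
    intro z hz
    rw [mem_goodL] at hz ⊢
    refine ⟨hz.1, hz.2.1, ?_⟩
    rcases hz.2.2 with hL | hR
    · exact Or.inl fun x h1 h2 => jitter_le hU (hL x h1 h2)
    · exact Or.inr fun x h1 h2 => jitter_le hU (hR x h1 h2)


/-- There is an absolute constant `C` such that for every `n ≥ 2` and every nonnegative demand
matrix `W`, there is an assignment of integer predictions `p : V → {1, …, ⌈ln n⌉}` for which the
expected total weighted path length of the LASLiN network (heights `p u + U u`, `U` i.i.d.
uniform on `(0,1)`) is at most `C` times the total weighted path length of any static skip list
network with heights in `{1, …, ⌈ln n⌉}`: LASLiN is `O(1)`-consistent with respect to an optimum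
static skip list network of logarithmically bounded heights. -/
theorem laslin_consistency :
    ∃ C : ℝ, 0 < C ∧ ∀ n : ℕ, 2 ≤ n →
      ∀ (Ω : Type) [MeasurableSpace Ω] (μ : Measure Ω), IsProbabilityMeasure μ →
      ∀ U : Fin n → Ω → ℝ, (∀ i, Measurable (U i)) →
        iIndepFun U μ →
        (∀ i, Measure.map (U i) μ = volume.restrict (Set.Ioo (0 : ℝ) 1)) →
        ∀ W : Fin n → Fin n → ℝ, (∀ u v, 0 ≤ W u v) →
        ∃ p : Fin n → ℕ, (∀ u, 1 ≤ p u ∧ p u ≤ ⌈Real.log n⌉₊) ∧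
          ∀ g : Fin n → ℕ, (∀ u, 1 ≤ g u ∧ g u ≤ ⌈Real.log n⌉₊) →
            ∫ ω, (∑ u : Fin n, ∑ v : Fin n,
                W u v * (dist (fun i => (p i : ℝ) + U i ω) u v : ℝ)) ∂μ ≤
              C * ∑ u : Fin n, ∑ v : Fin n, W u v * (dist g u v : ℝ) := by

  refine ⟨1, one_pos, ?_⟩
  intro n hn Ω _ μ hμ U hUmeas _ hUdist W hW
  set k := ⌈Real.log n⌉₊ with hk
  have hk1 : 1 ≤ k := by
    have h1 : (1:ℝ) < n := by exact_mod_cast lt_of_lt_of_le one_lt_two hn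
    have : 0 < Real.log n := Real.log_pos h1
    exact Nat.ceil_pos.2 this
  set cost : (Fin n → ℕ) → ℝ :=
    fun g => ∑ u : Fin n, ∑ v : Fin n, W u v * (dist g u v : ℝ) with hcost
  have hcost_nonneg : ∀ g, 0 ≤ cost g := fun g =>
    Finset.sum_nonneg fun u _ => Finset.sum_nonneg fun v _ =>
      mul_nonneg (hW u v) (Nat.cast_nonneg _)
  set T : Finset (Fin n → ℕ) := Fintype.piFinset (fun _ => Finset.Icc 1 k) with hT
  have hTmem : ∀ g : Fin n → ℕ, g ∈ T ↔ ∀ u, 1 ≤ g u ∧ g u ≤ k := by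
    intro g
    simp [hT, Fintype.mem_piFinset]
  have hTne : T.Nonempty := ⟨fun _ => 1, (hTmem _).2 fun _ => ⟨le_refl _, hk1⟩⟩
  obtain ⟨p, hpT, hpmin⟩ := Finset.exists_min_image T cost hTne
  refine ⟨p, (hTmem p).1 hpT, ?_⟩
  intro g hg
  have hcostpg : cost p ≤ cost g := hpmin g ((hTmem g).2 hg)
  -- almost everywhere, all U i lie in (0,1)
  have hae : ∀ᵐ ω ∂μ, ∀ i, U i ω ∈ Set.Ioo (0:ℝ) 1 := by
    rw [MeasureTheory.ae_all_iff]
    intro i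
    have hmeas : MeasurableSet (Set.Ioo (0:ℝ) 1) := measurableSet_Ioo
    have h1 : μ (U i ⁻¹' Set.Ioo (0:ℝ) 1) = 1 := by
      have := Measure.map_apply (hUmeas i) hmeas (f := U i) (μ := μ)
      rw [hUdist i] at this
      rw [← this, Measure.restrict_apply_self, Real.volume_Ioo]
      simp
    rw [MeasureTheory.ae_iff]
    have hset : {ω | ¬ U i ω ∈ Set.Ioo (0:ℝ) 1} = (U i ⁻¹' Set.Ioo (0:ℝ) 1)ᶜ := rfl
    rw [hset, measure_compl (hUmeas i hmeas) (measure_ne_top μ _), h1,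
      measure_univ, tsub_self]
  have hbound : ∀ᵐ ω ∂μ,
      (∑ u : Fin n, ∑ v : Fin n,
        W u v * (dist (fun i => (p i : ℝ) + U i ω) u v : ℝ)) ≤ cost p := by
    filter_upwards [hae] with ω hω
    refine Finset.sum_le_sum fun u _ => Finset.sum_le_sum fun v _ => ?_
    exact mul_le_mul_of_nonneg_left
      (Nat.cast_le.2 (dist_jitter_le p (fun i => U i ω) hω u v)) (hW u v)
  rw [one_mul]
  by_cases hf : MeasureTheory.Integrable (fun ω => ∑ u : Fin n, ∑ v : Fin n,
      W u v * (dist (fun i => (p i : ℝ) + U i ω) u v : ℝ)) μ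
  · calc ∫ ω, (∑ u : Fin n, ∑ v : Fin n,
          W u v * (dist (fun i => (p i : ℝ) + U i ω) u v : ℝ)) ∂μ
        ≤ ∫ _, cost p ∂μ := integral_mono_ae hf (integrable_const _) hbound
      _ = cost p := by simp
      _ ≤ cost g := hcostpg
  · rw [MeasureTheory.integral_undef hf]
    exact le_trans (hcost_nonneg p) hcostpg


end P2P
end
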